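/- arXiv:2105.11806 — 5 statements merged into one kernel-verified Lean document; each statement's English description precedes it below -/
import Mathlib

section
/- For all nonnegative integers d₁, …, d_n and a formal variable ξ, the following identity of rational functions in q and ξ holds: (ξ;q²)_{d₁+⋯+d_n} / ∏_{i=1}^n (q²;q²)_{d_i} = ∑ (over all decompositions α_i + β_i = d_i for i = 1,…,n) of (−q)^{β₁²+⋯+β_n² + 2·∑_{i=1}^{n−1} β_{i+1}(d₁+⋯+d_i)} · (ξ q^{−1})^{β₁+⋯+β_n} / ∏_{i=1}^n ((q²;q²)_{α_i} (q²;q²)_{β_i}). -/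
/-!
Cutting `range (d₁ + ⋯ + dₙ)` into consecutive blocks of lengths `dᵢ` factors `(ξ;q²)_{d₁+⋯+dₙ}`
as `∏ᵢ (ξ q^{2(d₁+⋯+d_{i-1})}; q²)_{dᵢ}`. Each factor is expanded by Cauchy's `q`-binomial theorem
`(x;p)_d = ∑_b [d choose b]_p (-x)^b p^{b(b-1)/2}` with `p = q²`, and multiplying out the product of
sums gives the sum over all `β`; the exponent of `-q` comes from `b² = 2·(b choose 2) + b`.
-/

open Finset

section QBinomial

variable {K : Type*} [Field K]

/-- `qFactorial p k` is `(p;p)_k`; with `p = q²` it is the `(q²;q²)_k` of the statement. -/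
def qFactorial (p : K) (k : ℕ) : K := ∏ s ∈ range k, (1 - p ^ (s + 1))

/-- Junk value `0` for `b > d`, so that Pascal's rule below also holds at `b = d`. -/
def qBinomial (p : K) (d b : ℕ) : K :=
  if b ≤ d then qFactorial p d / (qFactorial p (d - b) * qFactorial p b) else 0

@[simp] lemma qFactorial_zero (p : K) : qFactorial p 0 = 1 := prod_range_zero _

lemma qFactorial_succ (p : K) (k : ℕ) :
    qFactorial p (k + 1) = qFactorial p k * (1 - p ^ (k + 1)) :=
  prod_range_succ _ _

lemma qBinomial_of_lt (p : K) {d b : ℕ} (h : d < b) : qBinomial p d b = 0 := if_neg h.not_ge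

variable {p : K} (hp : ∀ s : ℕ, 1 ≤ s → (1 : K) - p ^ s ≠ 0)
include hp

lemma qFactorial_ne_zero (k : ℕ) : qFactorial p k ≠ 0 :=
  prod_ne_zero_iff.2 fun s _ => hp (s + 1) (Nat.le_add_left 1 s)

lemma qBinomial_zero_right (d : ℕ) : qBinomial p d 0 = 1 := by
  simp [qBinomial, div_self (qFactorial_ne_zero hp d)]

lemma qBinomial_self (d : ℕ) : qBinomial p d d = 1 := by
  simp [qBinomial, div_self (qFactorial_ne_zero hp d)]

lemma qBinomial_succ_succ {d b : ℕ} (hb : b ≤ d) :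
    qBinomial p (d + 1) (b + 1) = qBinomial p d (b + 1) + p ^ (d - b) * qBinomial p d b := by
  obtain rfl | hlt := hb.eq_or_lt
  · simp [qBinomial, div_self (qFactorial_ne_zero hp _)]
  obtain ⟨a, rfl⟩ : ∃ a, d = b + 1 + a := ⟨d - (b + 1), by omega⟩
  have hFa := qFactorial_ne_zero hp a
  have hFb := qFactorial_ne_zero hp b
  have hpa := hp (a + 1) (Nat.le_add_left 1 a)
  have hpb := hp (b + 1) (Nat.le_add_left 1 b)
  simp only [qBinomial, show b + 1 + a + 1 - (b + 1) = a + 1 by omega,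
    show b + 1 + a - (b + 1) = a by omega, show b + 1 + a - b = a + 1 by omega,
    if_pos (by omega : b + 1 ≤ b + 1 + a + 1),
    if_pos (by omega : b + 1 ≤ b + 1 + a), if_pos (by omega : b ≤ b + 1 + a),
    qFactorial_succ p (b + 1 + a), qFactorial_succ p a, qFactorial_succ p b]
  field_simp
  ring

theorem prod_one_sub_mul_pow_eq_sum_qBinomial (x : K) (d : ℕ) :
    ∏ s ∈ range d, (1 - x * p ^ s) =
      ∑ b ∈ range (d + 1), qBinomial p d b * ((-x) ^ b * p ^ b.choose 2) := by
  induction d with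
  | zero => simp [qBinomial]
  | succ d ih =>
    set t : ℕ → K := fun b => (-x) ^ b * p ^ b.choose 2
    have ht : ∀ b, t (b + 1) = -x * p ^ b * t b := fun b => by
      simp only [t, Nat.choose_succ_succ', Nat.choose_one_right]; ring
    have hpascal : ∀ b ∈ range (d + 1), qBinomial p (d + 1) (b + 1) * t (b + 1) =
        qBinomial p d (b + 1) * t (b + 1) + -x * p ^ d * (qBinomial p d b * t b) := by
      intro b hb
      have hbd : b ≤ d := Nat.lt_succ_iff.1 (mem_range.1 hb)
      rw [qBinomial_succ_succ hp hbd, ht, ← Nat.sub_add_cancel hbd, pow_add,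
        Nat.sub_add_cancel hbd]
      ring
    have hshift : ∑ b ∈ range (d + 1), qBinomial p d (b + 1) * t (b + 1) + t 0 =
        ∑ b ∈ range (d + 1), qBinomial p d b * t b := by
      have h := sum_range_succ' (fun b => qBinomial p d b * t b) (d + 1)
      rw [sum_range_succ, qBinomial_of_lt p d.lt_succ_self, zero_mul, add_zero,
        qBinomial_zero_right hp, one_mul] at h
      exact h.symm
    rw [prod_range_succ, ih, sum_range_succ' _ (d + 1), sum_congr rfl hpascal, sum_add_distrib,
      ← mul_sum, qBinomial_zero_right hp, one_mul, ← hshift]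
    ring

end QBinomial

theorem prod_range_sum_eq_prod_prod_range {M : Type*} [CommMonoid M] (f : ℕ → M) :
    ∀ {n : ℕ} (d : Fin n → ℕ), ∏ s ∈ range (∑ i, d i), f s =
      ∏ i, ∏ s ∈ range (d i), f (∑ j ∈ univ.filter (fun j => j < i), d j + s)
  | 0, _ => by simp
  | n + 1, d => by
    have hlt (i : Fin n) : ∑ j ∈ univ.filter (fun j => j < i.castSucc), d j =
        ∑ j ∈ univ.filter (fun j => j < i), d j.castSucc := by
      simp [sum_filter, Fin.sum_univ_castSucc, (Fin.castSucc_lt_last i).asymm]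
    have hlast : ∑ j ∈ univ.filter (fun j => j < Fin.last n), d j = ∑ j : Fin n, d j.castSucc := by
      simp [sum_filter, Fin.sum_univ_castSucc, Fin.castSucc_lt_last]
    rw [Fin.sum_univ_castSucc, prod_range_add, prod_range_sum_eq_prod_prod_range f,
      Fin.prod_univ_castSucc, hlast]
    simp only [hlt]

section Splitting

variable {K : Type*} [Field K] {q : K}

lemma neg_mul_pow_mul_pow_choose_two (hq : q ≠ 0) (ξ : K) (S b : ℕ) :
    (-(ξ * q ^ (2 * S))) ^ b * (q ^ 2) ^ b.choose 2 = (-q) ^ (b ^ 2 + 2 * (b * S)) * (ξ / q) ^ b := by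
  have hb : b ^ 2 = 2 * b.choose 2 + b := by
    induction b with
    | zero => rfl
    | succ b ih => rw [Nat.choose_succ_succ', Nat.choose_one_right]; nlinarith
  rw [hb, pow_add, pow_add, pow_mul (-q), pow_mul (-q), neg_sq, neg_pow, neg_pow q, div_pow,
    mul_pow, ← pow_mul, ← pow_mul]
  field_simp
  ring

lemma prod_div_qFactorial_sq_eq_sum (hq : q ≠ 0) (hp : ∀ s : ℕ, 1 ≤ s → (1 : K) - (q ^ 2) ^ s ≠ 0)
    (ξ : K) (S d : ℕ) :
    (∏ s ∈ range d, (1 - ξ * q ^ (2 * (S + s)))) / qFactorial (q ^ 2) d =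
      ∑ b ∈ range (d + 1), (-q) ^ (b ^ 2 + 2 * (b * S)) * (ξ / q) ^ b /
        (qFactorial (q ^ 2) (d - b) * qFactorial (q ^ 2) b) := by
  have hshift (s : ℕ) : ξ * q ^ (2 * (S + s)) = ξ * q ^ (2 * S) * (q ^ 2) ^ s := by ring
  simp only [hshift]
  rw [prod_one_sub_mul_pow_eq_sum_qBinomial hp, sum_div]
  refine sum_congr rfl fun b hb => ?_
  rw [qBinomial, if_pos (Nat.lt_succ_iff.1 (mem_range.1 hb)), ← neg_mul_pow_mul_pow_choose_two hq]
  have hFd := qFactorial_ne_zero hp d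
  field_simp

end Splitting

/-- The n-node splitting identity:
`(ξ;q²)_{d₁+⋯+d_n} / ∏ (q²;q²)_{d_i}` equals the sum over all decompositions
`α_i + β_i = d_i` of
`(-q)^{∑ β_i² + 2 ∑_{i} β_i (d₁+⋯+d_{i-1})} (ξ q⁻¹)^{∑ β_i} / ∏ ((q²;q²)_{α_i}(q²;q²)_{β_i})`. -/
theorem stmt_1 {K : Type*} [Field K] (q ξ : K) (hq : q ≠ 0)
    (hpoch : ∀ s : ℕ, 1 ≤ s → (1 : K) - q ^ (2 * s) ≠ 0)
    (n : ℕ) (d : Fin n → ℕ) :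
    (∏ s ∈ Finset.range (∑ i, d i), (1 - ξ * q ^ (2 * s))) /
        ∏ i, ∏ s ∈ Finset.range (d i), (1 - q ^ (2 * (s + 1))) =
      ∑ β ∈ Fintype.piFinset (fun i => Finset.range (d i + 1)),
        (-q) ^ ((∑ i, (β i) ^ 2) +
            2 * ∑ i, β i * ∑ j ∈ Finset.univ.filter (fun j => j < i), d j) *
          (ξ / q) ^ (∑ i, β i) /
          ∏ i, ((∏ s ∈ Finset.range (d i - β i), (1 - q ^ (2 * (s + 1)))) *
            ∏ s ∈ Finset.range (β i), (1 - q ^ (2 * (s + 1)))) := by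
  have hp : ∀ s : ℕ, 1 ≤ s → (1 : K) - (q ^ 2) ^ s ≠ 0 := fun s hs => by
    rw [← pow_mul]; exact hpoch s hs
  have hfac (k : ℕ) : ∏ s ∈ range k, (1 - q ^ (2 * (s + 1))) = qFactorial (q ^ 2) k := by
    simp only [qFactorial, ← pow_mul]
  simp only [hfac]
  rw [prod_range_sum_eq_prod_prod_range (fun s => 1 - ξ * q ^ (2 * s)), ← prod_div_distrib]
  simp only [prod_div_qFactorial_sq_eq_sum hq hp]
  rw [prod_univ_sum]
  refine sum_congr rfl fun β _ => ?_
  rw [prod_div_distrib, prod_mul_distrib, prod_pow_eq_pow_sum, prod_pow_eq_pow_sum,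
    sum_add_distrib, mul_sum]
end

section
/- Let C be a symmetric integer matrix indexed by a finite set containing four distinct elements a, b, c, d, and suppose C_ab = C_cd − 1 and C_{a i} + C_{b i} = C_{c i} + C_{d i} − δ_{c i} − δ_{d i} for all indices i (where δ is the Kronecker delta). Define k = C_ad − C_aa and l = C_dd − C_aa. Then: C_ab = C_ac + k, C_cd = C_ac + k + 1, C_bd = C_ac + l, C_bc = C_cc + k, C_bb = C_cc + l, C_dd = C_aa + l, C_ad = C_aa + k, and moreover C_aa + C_bb = C_cc + C_dd. -/
/-- The local equivalence conditions force the 4×4 submatrix on indices `a, d, c, b`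
to be determined by `C_aa, C_cc, C_ac` and `k = C_ad - C_aa`, `l = C_dd - C_aa`. -/
theorem stmt_5 {ι : Type*} [Fintype ι] [DecidableEq ι] (C : ι → ι → ℤ)
    (hsymm : ∀ i j, C i j = C j i) (a b c d : ι)
    (hab : a ≠ b) (hac : a ≠ c) (had : a ≠ d) (hbc : b ≠ c) (hbd : b ≠ d) (hcd : c ≠ d)
    (h1 : C a b = C c d - 1)
    (h2 : ∀ i, C a i + C b i =
      C c i + C d i - (if c = i then 1 else 0) - (if d = i then 1 else 0))
    (k l : ℤ) (hk : k = C a d - C a a) (hl : l = C d d - C a a) :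
    C a b = C a c + k ∧
    C c d = C a c + k + 1 ∧
    C b d = C a c + l ∧
    C b c = C c c + k ∧
    C b b = C c c + l ∧
    C d d = C a a + l ∧
    C a d = C a a + k ∧
    C a a + C b b = C c c + C d d := by
  have ha := h2 a
  have hb := h2 b
  have hc := h2 c
  have hd := h2 d
  simp only [if_neg (Ne.symm hac), if_neg (Ne.symm had), if_neg hbc.symm, if_neg hbd.symm,
    if_pos rfl, if_neg hcd, if_neg (Ne.symm hcd)] at ha hb hc hd
  norm_num at ha hb hc hd
  have s1 := hsymm b a
  have s2 := hsymm c a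
  have s3 := hsymm d a
  have s4 := hsymm c b
  have s5 := hsymm d b
  have s6 := hsymm d c
  refine ⟨?_, ?_, ?_, ?_, ?_, ?_, ?_, ?_⟩ <;> linarith
end

section
/- Let Q₀ be a finite index set with distinct elements a, b, c, d, let C be a symmetric integer matrix on Q₀ satisfying C_{cd} = C_{ab} + 1 and C_{a i} + C_{b i} = C_{c i} + C_{d i} − δ_{c i} − δ_{d i} for all i ∈ Q₀, and let C′ be obtained from C by exchanging the entries C_{ab} ↔ C_{cd} (and symmetrically C_{ba} ↔ C_{dc}). Let λ : Q₀ → M be a map into a commutative monoid of monomials with λ_a λ_b = λ_c λ_d. Then for every N ≥ 0, ∑ over dimension vectors d : Q₀ → ℕ with ∑_i d_i = N of (−q)^{∑_{i,j} C_{ij} d_i d_j} · ∏_i λ_i^{d_i} / (q²;q²)_{d_i} equals the same sum with C replaced by C′. Consequently the motivic generating series of Q and Q′ agree after the substitution x_i = x λ_i. -/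
/-!
Write `t = q²` and `(t;t)_k = ∏_{s<k} (1 - t^(s+1))`. The identity
`1 / ((t;t)_m (t;t)_n) = ∑_k t^((m-k)(n-k)) / ((t;t)_(m-k) (t;t)_(n-k) (t;t)_k)`,
which after clearing denominators is a telescoping sum of Gaussian binomials, splits the factors
of a dimension vector `d` at two nodes `x ≠ y` as `d = e + k (δ_x + δ_y)`. The degree-`N`
coefficient becomes a sum over the pairs `(e, k)` with `|e| + 2k = N`, weighted by `(λ_x λ_y)^k`
and by `(-q)` to the power `C(e + k (δ_x + δ_y)) + 2 e_x e_y`.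

Splitting `C` at `(a, b)` and `C'` at `(c, d)` gives sums over the same pairs with the same
weights, since `λ_a λ_b = λ_c λ_d`. The exponents agree as well:
`C' = C + E_ab + E_ba - E_cd - E_dc`, and the linear conditions say
`C (δ_a + δ_b) = C (δ_c + δ_d) - (δ_c + δ_d)`.
-/

open Finset Matrix

section QSeries

variable {R : Type*} [CommRing R] (t : R)

-- `qPochhammer t k` is `(t;t)_k`; the paper's `(q²;q²)_k` is `qPochhammer (q ^ 2) k`.
def qPochhammer (k : ℕ) : R := ∏ s ∈ range k, (1 - t ^ (s + 1))

def qDescFactorial (n k : ℕ) : R := ∏ s ∈ range k, (1 - t ^ (n - s))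

def gaussBinom : ℕ → ℕ → R
  | _, 0 => 1
  | 0, _ + 1 => 0
  | m + 1, k + 1 => gaussBinom m (k + 1) + t ^ (m - k) * gaussBinom m k

@[simp] lemma gaussBinom_zero_right (m : ℕ) : gaussBinom t m 0 = 1 := by
  cases m <;> rfl

lemma gaussBinom_succ_succ (m k : ℕ) :
    gaussBinom t (m + 1) (k + 1) = gaussBinom t m (k + 1) + t ^ (m - k) * gaussBinom t m k :=
  rfl

lemma gaussBinom_eq_zero_of_lt {m k : ℕ} (h : m < k) : gaussBinom t m k = 0 := by
  induction m generalizing k with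
  | zero => obtain ⟨k, rfl⟩ := Nat.exists_eq_add_one_of_ne_zero (by omega : k ≠ 0); rfl
  | succ m ih =>
    obtain ⟨k, rfl⟩ := Nat.exists_eq_add_one_of_ne_zero (by omega : k ≠ 0)
    rw [gaussBinom_succ_succ, ih (by omega), ih (by omega), mul_zero, add_zero]

lemma qPochhammer_succ (k : ℕ) : qPochhammer t (k + 1) = qPochhammer t k * (1 - t ^ (k + 1)) :=
  prod_range_succ _ _

lemma qDescFactorial_succ (n k : ℕ) :
    qDescFactorial t n (k + 1) = qDescFactorial t n k * (1 - t ^ (n - k)) :=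
  prod_range_succ _ _

lemma qDescFactorial_succ_succ (n k : ℕ) :
    qDescFactorial t (n + 1) (k + 1) = (1 - t ^ (n + 1)) * qDescFactorial t n k := by
  simp [qDescFactorial, prod_range_succ', mul_comm]

-- With truncated subtraction, the factor `s = n` is `1 - t ^ 0 = 0`.
lemma qDescFactorial_eq_zero_of_lt {n k : ℕ} (h : n < k) : qDescFactorial t n k = 0 :=
  prod_eq_zero (mem_range.2 h) (by simp)

lemma qDescFactorial_mul_qPochhammer {n k : ℕ} (h : k ≤ n) :
    qDescFactorial t n k * qPochhammer t (n - k) = qPochhammer t n := by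
  obtain ⟨j, rfl⟩ := Nat.exists_eq_add_of_le' h
  rw [Nat.add_sub_cancel, qPochhammer, qPochhammer, prod_range_add, mul_comm, qDescFactorial,
    ← prod_range_reflect (fun s => 1 - t ^ (j + s + 1)) k]
  congr 1
  refine prod_congr rfl fun s hs => ?_
  rw [mem_range] at hs
  congr 2
  omega

lemma gaussBinom_mul_qPochhammer (m k : ℕ) :
    gaussBinom t m k * qPochhammer t k = qDescFactorial t m k := by
  induction m generalizing k with
  | zero => cases k <;> simp [qDescFactorial, qPochhammer, gaussBinom, prod_range_succ']
  | succ m ih =>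
    cases k with
    | zero => simp [qDescFactorial, qPochhammer]
    | succ k =>
      rw [gaussBinom_succ_succ, qDescFactorial_succ_succ]
      rcases lt_or_ge m k with hmk | hkm
      · rw [gaussBinom_eq_zero_of_lt t hmk, gaussBinom_eq_zero_of_lt t (by omega),
          qDescFactorial_eq_zero_of_lt t hmk]
        ring
      · have hexp : t ^ (m - k) * t ^ (k + 1) = t ^ (m + 1) := by
          rw [← pow_add]; congr 1; omega
        have hk1 := ih (k + 1)
        rw [qDescFactorial_succ, qPochhammer_succ] at hk1
        rw [qPochhammer_succ]
        linear_combination hk1 + t ^ (m - k) * (1 - t ^ (k + 1)) * ih k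
          - qDescFactorial t m k * hexp

theorem sum_pow_mul_gaussBinom_mul_qDescFactorial (m n : ℕ) :
    ∑ k ∈ range (m + 1), t ^ ((m - k) * (n - k)) * (gaussBinom t m k * qDescFactorial t n k) =
      1 := by
  induction m with
  | zero => simp [qDescFactorial]
  | succ m ih =>
    -- The q-Pascal rule turns each new term into an old one plus a difference of `w`'s.
    set w : ℕ → R := fun k =>
      t ^ ((m + 1 - k) * (n - k)) * (gaussBinom t m k * qDescFactorial t n k)
    have hstep : ∀ k ∈ range (m + 1),
        t ^ ((m + 1 - (k + 1)) * (n - (k + 1))) *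
          (gaussBinom t (m + 1) (k + 1) * qDescFactorial t n (k + 1)) =
        t ^ ((m - k) * (n - k)) * (gaussBinom t m k * qDescFactorial t n k) +
          (w (k + 1) - w k) := by
      intro k hk
      have hkm : k ≤ m := Nat.lt_succ_iff.1 (mem_range.1 hk)
      have hpow : t ^ ((m - k) * (n - (k + 1))) * t ^ (m - k) * (1 - t ^ (n - k)) =
          t ^ ((m - k) * (n - k)) - t ^ ((m + 1 - k) * (n - k)) := by
        rcases le_or_gt n k with hnk | hkn
        · simp [Nat.sub_eq_zero_of_le hnk]
        · obtain ⟨i, rfl⟩ := Nat.exists_eq_add_of_le hkm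
          obtain ⟨j, rfl⟩ := Nat.exists_eq_add_of_lt hkn
          rw [show k + i + 1 - k = i + 1 by omega, show k + j + 1 - (k + 1) = j by omega,
            show k + j + 1 - k = j + 1 by omega, Nat.add_sub_cancel_left]
          ring
      simp only [w, Nat.add_sub_add_right, gaussBinom_succ_succ, qDescFactorial_succ]
      linear_combination gaussBinom t m k * qDescFactorial t n k * hpow
    rw [sum_range_succ', sum_congr rfl hstep, sum_add_distrib, ih, sum_range_sub]
    simp [w, gaussBinom_eq_zero_of_lt t (Nat.lt_succ_self m), qDescFactorial]

end QSeries

section QPochhammerField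

variable {K : Type*} [Field K] {t : K}

theorem qPochhammer_ne_zero (ht : ∀ s, 1 - t ^ (s + 1) ≠ 0) (k : ℕ) : qPochhammer t k ≠ 0 :=
  prod_ne_zero_iff.2 fun s _ => ht s

theorem div_qPochhammer_mul_div_qPochhammer (ht : ∀ s, 1 - t ^ (s + 1) ≠ 0) (α β : K) (m n : ℕ) :
    α ^ m / qPochhammer t m * (β ^ n / qPochhammer t n) =
      ∑ k ∈ range (min m n + 1), t ^ ((m - k) * (n - k)) * ((α * β) ^ k / qPochhammer t k) *
        (α ^ (m - k) / qPochhammer t (m - k) * (β ^ (n - k) / qPochhammer t (n - k))) := by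
  have hP := qPochhammer_ne_zero ht
  have key := sum_pow_mul_gaussBinom_mul_qDescFactorial t m n
  rw [← sum_subset (range_subset_range.2 (Nat.succ_le_succ (min_le_left m n))) fun k hkm hk => by
    rw [qDescFactorial_eq_zero_of_lt t (by simp at hkm hk; omega), mul_zero, mul_zero]] at key
  rw [← mul_one (_ * _), ← key, mul_sum]
  refine sum_congr rfl fun k hk => ?_
  have hkm : k ≤ m := by simp at hk; omega
  have hkn : k ≤ n := by simp at hk; omega
  have hm : gaussBinom t m k * qPochhammer t k * qPochhammer t (m - k) = qPochhammer t m := by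
    rw [gaussBinom_mul_qPochhammer, qDescFactorial_mul_qPochhammer t hkm]
  have hn := qDescFactorial_mul_qPochhammer t hkn
  have hG : gaussBinom t m k ≠ 0 := by
    intro h; apply hP m; rw [← hm, h]; ring
  have hF : qDescFactorial t n k ≠ 0 := by
    intro h; apply hP n; rw [← hn, h]; ring
  rw [← hm, ← hn, ← pow_sub_mul_pow α hkm, ← pow_sub_mul_pow β hkn]
  field_simp
  ring

end QPochhammerField

section PairVec

variable {ι R : Type*} [DecidableEq ι] [AddCommMonoidWithOne R]

def pairVec (x y : ι) : ι → R := Pi.single x 1 + Pi.single y 1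

lemma sum_pairVec [Fintype ι] (x y : ι) : ∑ i, pairVec x y i = (2 : R) := by
  simp [pairVec, sum_add_distrib, one_add_one_eq_two]

variable {x y : ι}

@[simp] lemma pairVec_apply_left (hxy : x ≠ y) : pairVec x y x = (1 : R) := by
  simp [pairVec, hxy]

@[simp] lemma pairVec_apply_right (hxy : x ≠ y) : pairVec x y y = (1 : R) := by
  simp [pairVec, hxy.symm]

lemma pairVec_apply_of_ne {i : ι} (hx : i ≠ x) (hy : i ≠ y) : pairVec x y i = (0 : R) := by
  simp [pairVec, hx, hy]

end PairVec

section QuadraticForm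

variable {ι R : Type*} [Fintype ι] [CommRing R]

lemma Matrix.IsSymm.dotProduct_mulVec_comm {A : Matrix ι ι R} (hA : A.IsSymm) (v w : ι → R) :
    v ⬝ᵥ A *ᵥ w = w ⬝ᵥ A *ᵥ v := by
  rw [dotProduct_mulVec, ← hA.eq, vecMul_transpose, dotProduct_comm, hA.eq]

lemma Matrix.IsSymm.add_dotProduct_mulVec_add {A : Matrix ι ι R} (hA : A.IsSymm) (u w : ι → R) :
    (u + w) ⬝ᵥ A *ᵥ (u + w) = u ⬝ᵥ A *ᵥ u + 2 * (w ⬝ᵥ A *ᵥ u) + w ⬝ᵥ A *ᵥ w := by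
  rw [mulVec_add, dotProduct_add, add_dotProduct, add_dotProduct, hA.dotProduct_mulVec_comm u w]
  ring

def quadForm (M : Matrix ι ι ℤ) (dv : ι → ℕ) : ℤ := ∑ i, ∑ j, M i j * dv i * dv j

lemma quadForm_eq_dotProduct_mulVec (M : Matrix ι ι ℤ) (dv : ι → ℕ) :
    quadForm M dv = (fun i => (dv i : ℤ)) ⬝ᵥ M *ᵥ fun i => (dv i : ℤ) := by
  simp only [quadForm, dotProduct, mulVec, mul_sum]
  exact sum_congr rfl fun i _ => sum_congr rfl fun j _ => by ring

variable [DecidableEq ι]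

lemma dotProduct_single_one_mulVec (z : ι → R) (i j : ι) : z ⬝ᵥ single i j 1 *ᵥ z = z i * z j := by
  simp [single_mulVec_eq, dotProduct_smul, mul_comm]

theorem add_smul_pairVec_dotProduct_mulVec_exchange {C C' : Matrix ι ι ℤ} {a b c d : ι}
    (hac : a ≠ c) (had : a ≠ d) (hbc : b ≠ c) (hbd : b ≠ d) (hcd : c ≠ d) (hC : C.IsSymm)
    (hC' : C' = C + single a b 1 + single b a 1 - single c d 1 - single d c 1)
    (hlin : C *ᵥ pairVec a b = C *ᵥ pairVec c d - pairVec c d) (u : ι → ℤ) (g : ℤ) :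
    (u + g • pairVec a b) ⬝ᵥ C *ᵥ (u + g • pairVec a b) + 2 * u a * u b =
      (u + g • pairVec c d) ⬝ᵥ C' *ᵥ (u + g • pairVec c d) + 2 * u c * u d := by
  have hC'form : ∀ z : ι → ℤ, z ⬝ᵥ C' *ᵥ z = z ⬝ᵥ C *ᵥ z + 2 * z a * z b - 2 * z c * z d := by
    intro z
    simp only [hC', add_mulVec, sub_mulVec, dotProduct_add, dotProduct_sub,
      dotProduct_single_one_mulVec]
    ring
  have horth : pairVec a b ⬝ᵥ (pairVec c d : ι → ℤ) = 0 := by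
    simp [pairVec, hac, had, hbc, hbd]
  have hnorm : pairVec c d ⬝ᵥ (pairVec c d : ι → ℤ) = 2 := by
    simp [pairVec, hcd, hcd.symm]
  have hcross : pairVec a b ⬝ᵥ C *ᵥ u = pairVec c d ⬝ᵥ C *ᵥ u - (u c + u d) := by
    rw [hC.dotProduct_mulVec_comm, hlin, dotProduct_sub, hC.dotProduct_mulVec_comm]
    simp [pairVec, dotProduct_add]
  have hdiag : pairVec a b ⬝ᵥ C *ᵥ pairVec a b = pairVec c d ⬝ᵥ C *ᵥ pairVec c d - 2 := by
    rw [hlin, dotProduct_sub, horth, hC.dotProduct_mulVec_comm, hlin, dotProduct_sub, hnorm]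
    ring
  have hva : (u + g • pairVec c d : ι → ℤ) a = u a := by simp [pairVec_apply_of_ne hac had]
  have hvb : (u + g • pairVec c d : ι → ℤ) b = u b := by simp [pairVec_apply_of_ne hbc hbd]
  have hvc : (u + g • pairVec c d : ι → ℤ) c = u c + g := by simp [hcd]
  have hvd : (u + g • pairVec c d : ι → ℤ) d = u d + g := by simp [hcd]
  rw [hC'form, hva, hvb, hvc, hvd]
  simp only [hC.add_dotProduct_mulVec_add, mulVec_smul, dotProduct_smul, smul_dotProduct,
    smul_eq_mul]
  linear_combination 2 * g * hcross + g ^ 2 * hdiag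

end QuadraticForm

section DimensionVectors

variable {ι : Type*} [DecidableEq ι]

lemma smul_pairVec_le_iff {x y : ι} (hxy : x ≠ y) (dv : ι → ℕ) (γ : ℕ) :
    γ • pairVec x y ≤ dv ↔ γ ≤ dv x ∧ γ ≤ dv y := by
  refine ⟨fun h => ⟨by simpa [hxy] using h x, by simpa [hxy] using h y⟩, ?_⟩
  rintro ⟨hx, hy⟩ i
  by_cases hix : i = x
  · subst hix; simpa [hxy] using hx
  by_cases hiy : i = y
  · subst hiy; simpa [hxy] using hy
  simp [pairVec_apply_of_ne hix hiy]

lemma natCast_add_smul_pairVec (x y : ι) (e : ι → ℕ) (γ : ℕ) :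
    (fun i => ((e + γ • pairVec x y : ι → ℕ) i : ℤ)) =
      (fun i => (e i : ℤ)) + (γ : ℤ) • pairVec x y := by
  funext i
  simp [pairVec, Pi.single_apply]

variable [Fintype ι]

theorem quadForm_add_smul_pairVec_exchange {C C' : Matrix ι ι ℤ} {a b c d : ι}
    (hac : a ≠ c) (had : a ≠ d) (hbc : b ≠ c) (hbd : b ≠ d) (hcd : c ≠ d) (hC : C.IsSymm)
    (hC' : C' = C + single a b 1 + single b a 1 - single c d 1 - single d c 1)
    (hlin : C *ᵥ pairVec a b = C *ᵥ pairVec c d - pairVec c d) (e : ι → ℕ) (γ : ℕ) :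
    quadForm C (e + γ • pairVec a b) + 2 * e a * e b =
      quadForm C' (e + γ • pairVec c d) + 2 * e c * e d := by
  rw [quadForm_eq_dotProduct_mulVec, quadForm_eq_dotProduct_mulVec, natCast_add_smul_pairVec,
    natCast_add_smul_pairVec]
  exact add_smul_pairVec_dotProduct_mulVec_exchange hac had hbc hbd hcd hC hC' hlin _ _

lemma sum_add_smul_pairVec (x y : ι) (e : ι → ℕ) (γ : ℕ) :
    univ.sum (e + γ • pairVec x y) = univ.sum e + 2 * γ := by
  simp [sum_add_distrib, ← mul_sum, sum_pairVec, mul_comm]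

theorem sum_piAntidiag_sum_range_min {β : Type*} [AddCommMonoid β] {x y : ι} (hxy : x ≠ y)
    (N : ℕ) (F : (ι → ℕ) → ℕ → β) :
    ∑ dv ∈ piAntidiag univ N, ∑ γ ∈ range (min (dv x) (dv y) + 1), F dv γ =
      ∑ γ ∈ range (N / 2 + 1), ∑ e ∈ piAntidiag univ (N - 2 * γ), F (e + γ • pairVec x y) γ := by
  have hS : ∀ p ∈ (piAntidiag univ N).sigma fun dv => range (min (dv x) (dv y) + 1),
      univ.sum p.1 = N ∧ p.2 • pairVec x y ≤ p.1 := by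
    rintro ⟨dv, γ⟩ h
    simp only [mem_sigma, mem_piAntidiag, mem_range, mem_univ, implies_true, and_true] at h
    exact ⟨h.1, (smul_pairVec_le_iff hxy dv γ).2 ⟨by omega, by omega⟩⟩
  rw [sum_sigma', sum_sigma']
  refine sum_nbij' (fun p => ⟨p.2, p.1 - p.2 • pairVec x y⟩)
    (fun p => ⟨p.2 + p.1 • pairVec x y, p.1⟩) ?_ ?_
    (fun p hp => by rw [tsub_add_cancel_of_le (hS p hp).2])
    (fun p _ => by rw [add_tsub_cancel_right])
    (fun p hp => by rw [tsub_add_cancel_of_le (hS p hp).2])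
  · rintro ⟨dv, γ⟩ hp
    obtain ⟨hsum, hle⟩ := hS _ hp
    have hsplit := sum_add_smul_pairVec x y (dv - γ • pairVec x y) γ
    rw [tsub_add_cancel_of_le hle] at hsplit
    simp only [mem_sigma, mem_piAntidiag, mem_range, mem_univ, implies_true, and_true]
    omega
  · rintro ⟨γ, e⟩ h
    simp only [mem_sigma, mem_piAntidiag, mem_range, mem_univ, implies_true, and_true] at h ⊢
    rw [sum_add_smul_pairVec]
    simp only [Pi.add_apply, Pi.smul_apply, pairVec_apply_left hxy, pairVec_apply_right hxy,
      smul_eq_mul, mul_one]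
    omega

end DimensionVectors

section MotivicCoefficient

variable {ι K : Type*} [Fintype ι] [DecidableEq ι] [Field K]

lemma prod_eq_mul_mul_prod_compl_pair {M : Type*} [CommMonoid M] {x y : ι} (hxy : x ≠ y)
    (f : ι → M) : ∏ i, f i = f x * f y * ∏ i ∈ {x, y}ᶜ, f i := by
  rw [← prod_mul_prod_compl {x, y}, prod_pair hxy]

theorem prod_div_qPochhammer_eq_sum {t : K} (ht : ∀ s, 1 - t ^ (s + 1) ≠ 0) {x y : ι}
    (hxy : x ≠ y) (lam : ι → K) (dv : ι → ℕ) :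
    ∏ i, lam i ^ dv i / qPochhammer t (dv i) =
      ∑ γ ∈ range (min (dv x) (dv y) + 1), t ^ ((dv x - γ) * (dv y - γ)) *
        ((lam x * lam y) ^ γ / qPochhammer t γ) *
        ∏ i, lam i ^ (dv - γ • pairVec x y : ι → ℕ) i /
          qPochhammer t ((dv - γ • pairVec x y : ι → ℕ) i) := by
  rw [prod_eq_mul_mul_prod_compl_pair hxy, div_qPochhammer_mul_div_qPochhammer ht, sum_mul]
  refine sum_congr rfl fun γ _ => ?_
  rw [prod_eq_mul_mul_prod_compl_pair hxy]
  have hcompl : ∀ i ∈ ({x, y} : Finset ι)ᶜ,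
      lam i ^ (dv - γ • pairVec x y : ι → ℕ) i / qPochhammer t ((dv - γ • pairVec x y : ι → ℕ) i) =
        lam i ^ dv i / qPochhammer t (dv i) := by
    intro i hi
    simp only [mem_compl, mem_insert, mem_singleton, not_or] at hi
    simp [pairVec_apply_of_ne hi.1 hi.2]
  rw [prod_congr rfl hcompl]
  simp only [Pi.sub_apply, Pi.smul_apply, pairVec_apply_left hxy, pairVec_apply_right hxy,
    smul_eq_mul, mul_one]
  ring

def motivicCoeff (q : K) (M : Matrix ι ι ℤ) (lam : ι → K) (N : ℕ) : K :=
  ∑ dv ∈ piAntidiag univ N, (-q) ^ quadForm M dv * ∏ i, lam i ^ dv i / qPochhammer (q ^ 2) (dv i)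

theorem motivicCoeff_eq_sum_pairVec {q : K} (hq : q ≠ 0) (ht : ∀ s, 1 - (q ^ 2) ^ (s + 1) ≠ 0)
    (M : Matrix ι ι ℤ) {x y : ι} (hxy : x ≠ y) (lam : ι → K) (N : ℕ) :
    motivicCoeff q M lam N =
      ∑ γ ∈ range (N / 2 + 1), ∑ e ∈ piAntidiag univ (N - 2 * γ),
        (-q) ^ (quadForm M (e + γ • pairVec x y) + 2 * e x * e y) *
          ((lam x * lam y) ^ γ / qPochhammer (q ^ 2) γ *
            ∏ i, lam i ^ e i / qPochhammer (q ^ 2) (e i)) := by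
  rw [motivicCoeff, sum_congr rfl fun dv _ => by rw [prod_div_qPochhammer_eq_sum ht hxy, mul_sum],
    sum_piAntidiag_sum_range_min hxy]
  refine sum_congr rfl fun γ _ => sum_congr rfl fun e _ => ?_
  simp only [add_tsub_cancel_right, Pi.add_apply, Pi.smul_apply, pairVec_apply_left hxy,
    pairVec_apply_right hxy, smul_eq_mul, mul_one]
  have hexp : ((2 * e x * e y : ℕ) : ℤ) = 2 * e x * e y := by push_cast; ring
  rw [← hexp, zpow_add₀ (neg_ne_zero.2 hq), zpow_natCast, mul_assoc 2, pow_mul (-q), neg_sq]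
  ring

lemma sum_filter_piFinset_eq_motivicCoeff (q : K) (M : Matrix ι ι ℤ) (lam : ι → K) (N : ℕ) :
    ∑ dv ∈ (Fintype.piFinset fun _ : ι => range (N + 1)).filter (fun dv => ∑ i, dv i = N),
      (-q) ^ (∑ i, ∑ j, M i j * (dv i : ℤ) * (dv j : ℤ)) *
        ∏ i, (lam i ^ dv i / ∏ s ∈ range (dv i), (1 - q ^ (2 * (s + 1)))) =
    motivicCoeff q M lam N := by
  refine sum_congr ?_ fun dv _ => ?_
  · ext dv
    simp only [mem_filter, Fintype.mem_piFinset, mem_range, mem_piAntidiag, mem_univ,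
      implies_true, and_true, and_iff_right_iff_imp]
    intro h i
    have := single_le_sum (fun j _ => Nat.zero_le (dv j)) (mem_univ i)
    omega
  · simp [quadForm, qPochhammer, pow_mul]

end MotivicCoefficient

section Exchange

variable {ι : Type*} [DecidableEq ι]

theorem eq_add_single_of_exchange {C C' : Matrix ι ι ℤ} {a b c d : ι}
    (hab : a ≠ b) (hac : a ≠ c) (had : a ≠ d) (hbc : b ≠ c) (hbd : b ≠ d) (hcd : c ≠ d)
    (hCsymm : ∀ i j, C i j = C j i) (hC'symm : ∀ i j, C' i j = C' j i)
    (h1 : C c d = C a b + 1) (hC'ab : C' a b = C c d) (hC'cd : C' c d = C a b)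
    (hC'other : ∀ i j,
      ¬((i = a ∧ j = b) ∨ (i = b ∧ j = a) ∨ (i = c ∧ j = d) ∨ (i = d ∧ j = c)) →
      C' i j = C i j) :
    C' = C + single a b 1 + single b a 1 - single c d 1 - single d c 1 := by
  ext i j
  have hC'ba := hC'symm a b
  have hC'dc := hC'symm c d
  have hCba := hCsymm a b
  have hCdc := hCsymm c d
  by_cases h : (i = a ∧ j = b) ∨ (i = b ∧ j = a) ∨ (i = c ∧ j = d) ∨ (i = d ∧ j = c)
  · rcases h with ⟨hi, hj⟩ | ⟨hi, hj⟩ | ⟨hi, hj⟩ | ⟨hi, hj⟩ <;> rw [hi, hj] <;>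
      simp [hab, hac, had, hbc, hbd, hcd, hab.symm, hac.symm, had.symm, hbc.symm, hbd.symm,
        hcd.symm] <;> omega
  · rw [hC'other i j h]
    simp [single_apply]
    grind

theorem mulVec_pairVec_eq [Fintype ι] {C : Matrix ι ι ℤ} {a b c d : ι} (hC : C.IsSymm)
    (h2 : ∀ i, C a i + C b i =
      C c i + C d i - (if c = i then 1 else 0) - (if d = i then 1 else 0)) :
    C *ᵥ pairVec a b = C *ᵥ pairVec c d - pairVec c d := by
  ext i
  simp [pairVec, mulVec_add, Pi.single_apply, hC.apply, eq_comm (a := i), h2 i]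
  ring

end Exchange

/-- Local equivalence theorem of the knots-quivers correspondence: if `C'` is obtained
from the symmetric matrix `C` by exchanging `C_{ab} ↔ C_{cd}` where `C_{cd} = C_{ab}+1`,
the linear spectator conditions hold, and `λ_a λ_b = λ_c λ_d`, then for every `N` the
degree-`N` parts of the specialized motivic generating series coincide. -/
theorem stmt_7 {ι : Type*} [Fintype ι] [DecidableEq ι] {K : Type*} [Field K]
    (q : K) (hq : q ≠ 0)
    (hpoch : ∀ s : ℕ, 1 ≤ s → (1 : K) - q ^ (2 * s) ≠ 0)
    (C C' : ι → ι → ℤ) (a b c d : ι)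
    (hab : a ≠ b) (hac : a ≠ c) (had : a ≠ d) (hbc : b ≠ c) (hbd : b ≠ d) (hcd : c ≠ d)
    (hCsymm : ∀ i j, C i j = C j i) (hC'symm : ∀ i j, C' i j = C' j i)
    (h1 : C c d = C a b + 1)
    (h2 : ∀ i, C a i + C b i =
      C c i + C d i - (if c = i then 1 else 0) - (if d = i then 1 else 0))
    (hC'ab : C' a b = C c d) (hC'cd : C' c d = C a b)
    (hC'other : ∀ i j,
      ¬((i = a ∧ j = b) ∨ (i = b ∧ j = a) ∨ (i = c ∧ j = d) ∨ (i = d ∧ j = c)) →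
      C' i j = C i j)
    (lam : ι → K) (hlam : lam a * lam b = lam c * lam d) (N : ℕ) :
    ∑ dv ∈ (Fintype.piFinset fun _ : ι => Finset.range (N + 1)).filter
        (fun dv => ∑ i, dv i = N),
      (-q) ^ (∑ i, ∑ j, C i j * (dv i : ℤ) * (dv j : ℤ)) *
        ∏ i, (lam i ^ dv i / ∏ s ∈ Finset.range (dv i), (1 - q ^ (2 * (s + 1)))) =
    ∑ dv ∈ (Fintype.piFinset fun _ : ι => Finset.range (N + 1)).filter
        (fun dv => ∑ i, dv i = N),
      (-q) ^ (∑ i, ∑ j, C' i j * (dv i : ℤ) * (dv j : ℤ)) *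
        ∏ i, (lam i ^ dv i / ∏ s ∈ Finset.range (dv i), (1 - q ^ (2 * (s + 1)))) := by
  have hpoch' : ∀ s, 1 - (q ^ 2) ^ (s + 1) ≠ 0 := fun s => by
    rw [← pow_mul]
    exact hpoch (s + 1) s.succ_pos
  have hC : Matrix.IsSymm C := Matrix.IsSymm.ext fun i j => hCsymm j i
  have hC' := eq_add_single_of_exchange hab hac had hbc hbd hcd hCsymm hC'symm h1 hC'ab hC'cd
    hC'other
  have hlin := mulVec_pairVec_eq hC h2
  rw [sum_filter_piFinset_eq_motivicCoeff q C lam N, sum_filter_piFinset_eq_motivicCoeff q C' lam N,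
    motivicCoeff_eq_sum_pairVec hq hpoch' C hab, motivicCoeff_eq_sum_pairVec hq hpoch' C' hcd]
  refine sum_congr rfl fun γ _ => sum_congr rfl fun e _ => ?_
  rw [quadForm_add_smul_pairVec_exchange hac had hbc hbd hcd hC hC' hlin, hlam]
end

section
/- For all nonnegative integers d₁, d₂, all integers k, and a formal variable κ, setting π(α,β) = (2k(α₁+α₂) + (2k+1)(β₁+β₂))(β₁+β₂), one has ∑_{α_i+β_i=d_i} (−q)^{2β₁α₂ + π(α,β)} κ^{β₁+β₂}/((q²;q²)_{α₁}(q²;q²)_{β₁}(q²;q²)_{α₂}(q²;q²)_{β₂}) = ∑_{α_i+β_i=d_i} (−q)^{2β₂α₁ + π(α,β)} κ^{β₁+β₂}/((q²;q²)_{α₁}(q²;q²)_{β₁}(q²;q²)_{α₂}(q²;q²)_{β₂}), and both sides equal (κ q^{2k(d₁+d₂)+1}; q²)_{d₁+d₂} / ((q²;q²)_{d₁}(q²;q²)_{d₂}). -/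
open Finset

/-- q-Pochhammer-like product `∏_{s<m} (1 - Q^{s+1})`. -/
def stmt8PP {K : Type*} [Field K] (Q : K) (m : ℕ) : K := ∏ s ∈ range m, (1 - Q ^ (s + 1))

/-- Gaussian binomial coefficient as an element of `K`, via the Pascal recursion. -/
def stmt8gb {K : Type*} [Field K] (Q : K) : ℕ → ℕ → K
  | _, 0 => 1
  | 0, _ + 1 => 0
  | n + 1, k + 1 => stmt8gb Q n k + Q ^ (k + 1) * stmt8gb Q n (k + 1)

namespace Stmt8

variable {K : Type*} [Field K]

local notation "gb" => stmt8gb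
local notation "PP" => stmt8PP

lemma gb_zero_right (Q : K) (n : ℕ) : gb Q n 0 = 1 := by cases n <;> rfl

lemma gb_eq_zero (Q : K) : ∀ {n k : ℕ}, n < k → gb Q n k = 0
  | 0, _ + 1, _ => rfl
  | n + 1, k + 1, h => by
      rw [stmt8gb, gb_eq_zero Q (by omega), gb_eq_zero Q (by omega)]; ring

lemma gb_diag (Q : K) : ∀ n, gb Q n n = 1
  | 0 => rfl
  | n + 1 => by rw [stmt8gb, gb_diag Q n, gb_eq_zero Q (by omega)]; ring

lemma gb_pascal (Q : K) (n j : ℕ) :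
    gb Q (n + 1) j = (if j = 0 then 0 else gb Q n (j - 1)) + Q ^ j * gb Q n j := by
  cases j with
  | zero => simp [gb_zero_right]
  | succ c => simp [stmt8gb]

lemma PP_succ (Q : K) (m : ℕ) : PP Q (m + 1) = PP Q m * (1 - Q ^ (m + 1)) :=
  Finset.prod_range_succ _ _

lemma PP_zero (Q : K) : PP Q 0 = 1 := rfl

lemma gb_mul_PP (Q : K) : ∀ n k : ℕ, k ≤ n →
    gb Q n k * (PP Q k * PP Q (n - k)) = PP Q n := by
  intro n
  induction n with
  | zero => intro k hk; interval_cases k; simp [gb_zero_right, stmt8PP]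
  | succ n ih =>
    intro k hk
    cases k with
    | zero => simp [gb_zero_right, PP_zero, Nat.sub_zero]
    | succ j =>
      rcases Nat.lt_or_ge j n with hj | hj
      · have h1 := ih j (by omega)
        have h2 := ih (j + 1) (by omega)
        have e1 : n + 1 - (j + 1) = n - j := by omega
        have e2 : n - j = n - (j + 1) + 1 := by omega
        have e3 : n - (j + 1) + 1 = n - j := by omega
        have hUV : Q ^ (n + 1) = Q ^ (j + 1) * Q ^ (n - j) := by
          rw [← pow_add]; congr 1; omega
        rw [stmt8gb, e1, PP_succ Q j, e2, PP_succ Q (n - (j+1)), PP_succ Q n, e3, hUV]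
        rw [e2, PP_succ, e3] at h1
        rw [PP_succ] at h2
        linear_combination (1 - Q ^ (j+1)) * h1 + Q ^ (j+1) * (1 - Q ^ (n-j)) * h2
      · have hjn : j = n := by omega
        subst hjn
        rw [stmt8gb, gb_diag, gb_eq_zero Q (by omega), Nat.sub_self, PP_zero]
        ring

lemma vdm (Q : K) (hQ : Q ≠ 0) (d₁ : ℕ) : ∀ d₂ b : ℕ,
    ∑ j ∈ range (b + 1), Q ^ ((j : ℤ) * ((d₂ : ℤ) - (b : ℤ) + (j : ℤ))) *
      (gb Q d₁ j * gb Q d₂ (b - j)) = gb Q (d₁ + d₂) b := by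
  intro d₂
  induction d₂ with
  | zero =>
    intro b
    rw [Finset.sum_eq_single_of_mem b (self_mem_range_succ b)]
    · simp [gb_zero_right]
    · intro j hj hjb
      rw [gb_eq_zero Q (show 0 < b - j by simp at hj; omega)]
      ring
  | succ d₂ ih =>
    intro b
    cases b with
    | zero => simp [gb_zero_right, gb_eq_zero]
    | succ c =>
      have key : ∀ j ∈ range (c + 1),
          Q ^ ((j : ℤ) * (((d₂ + 1 : ℕ) : ℤ) - ((c + 1 : ℕ) : ℤ) + (j:ℤ))) *
            (gb Q d₁ j * gb Q (d₂ + 1) (c + 1 - j))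
          = Q ^ ((j : ℤ) * ((d₂:ℤ) - (c:ℤ) + (j:ℤ))) * (gb Q d₁ j * gb Q d₂ (c - j))
            + Q ^ (((c + 1 : ℕ)) : ℤ) * (Q ^ ((j : ℤ) * ((d₂:ℤ) - ((c + 1 : ℕ):ℤ) + (j:ℤ))) *
              (gb Q d₁ j * gb Q d₂ (c + 1 - j))) := by
        intro j hj
        simp only [mem_range] at hj
        have hcj : c + 1 - j = (c - j) + 1 := by omega
        rw [hcj, stmt8gb]
        have e1 : (j : ℤ) * (((d₂ + 1 : ℕ):ℤ) - ((c + 1 : ℕ):ℤ) + (j:ℤ)) = (j:ℤ) * ((d₂:ℤ) - (c:ℤ) + (j:ℤ)) := by push_cast; ring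
        rw [e1, ← zpow_natCast Q (c - j + 1)]
        have hQQ : Q ^ ((j:ℤ) * ((d₂:ℤ) - (c:ℤ) + (j:ℤ))) * Q ^ ((c - j + 1 : ℕ) : ℤ)
            = Q ^ (((c + 1 : ℕ)) : ℤ) * Q ^ ((j:ℤ) * ((d₂:ℤ) - ((c + 1 : ℕ):ℤ) + (j:ℤ))) := by
          rw [← zpow_add₀ hQ, ← zpow_add₀ hQ]
          congr 1
          push_cast [Nat.cast_sub (show j ≤ c by omega)]; ring
        linear_combination gb Q d₁ j * gb Q d₂ (c - j + 1) * hQQ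
      rw [show d₁ + (d₂ + 1) = (d₁ + d₂) + 1 from rfl, stmt8gb, ← ih c, ← ih (c + 1),
        Finset.mul_sum, ← zpow_natCast Q (c + 1)]
      rw [Finset.sum_range_succ, Finset.sum_congr rfl key, Finset.sum_add_distrib,
        add_assoc]
      congr 1
      rw [Finset.sum_range_succ _ (c + 1)]
      congr 1
      have hQQ2 : Q ^ (((c+1:ℕ):ℤ) * (((d₂+1:ℕ):ℤ) - ((c+1:ℕ):ℤ) + ((c+1:ℕ):ℤ)))
          = Q ^ ((c+1:ℕ):ℤ) * Q ^ (((c+1:ℕ):ℤ) * ((d₂:ℤ) - ((c+1:ℕ):ℤ) + ((c+1:ℕ):ℤ))) := by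
        rw [← zpow_add₀ hQ]; congr 1; push_cast; ring
      rw [Nat.sub_self, gb_zero_right, gb_zero_right, hQQ2]
      ring

lemma qbt (Q : K) : ∀ (n : ℕ) (x : K),
    ∑ b ∈ range (n + 1), (-x) ^ b * Q ^ (b.choose 2) * gb Q n b
      = ∏ s ∈ range n, (1 - x * Q ^ s) := by
  intro n
  induction n with
  | zero => intro x; simp [gb_zero_right]
  | succ n ih =>
    intro x
    have key : ∀ b ∈ range (n + 2), (-x) ^ b * Q ^ (b.choose 2) * gb Q (n + 1) b
        = (-x) ^ b * Q ^ (b.choose 2) * (if b = 0 then 0 else gb Q n (b - 1))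
          + (-(x * Q)) ^ b * Q ^ (b.choose 2) * gb Q n b := by
      intro b _
      rw [gb_pascal, show -(x * Q) = (-x) * Q by ring, mul_pow]
      ring
    rw [Finset.sum_congr rfl key, Finset.sum_add_distrib,
      Finset.sum_range_succ (fun b => (-(x * Q)) ^ b * Q ^ (b.choose 2) * gb Q n b) (n + 1),
      gb_eq_zero Q (by omega), mul_zero, add_zero,
      Finset.sum_range_succ' (fun b => (-x) ^ b * Q ^ (b.choose 2) *
        (if b = 0 then 0 else gb Q n (b - 1))) (n + 1)]
    have hsh : ∀ i ∈ range (n + 1),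
        (-x) ^ (i + 1) * Q ^ ((i + 1).choose 2) * (if i + 1 = 0 then 0 else gb Q n (i + 1 - 1))
          = (-x) * ((-(x * Q)) ^ i * Q ^ (i.choose 2) * gb Q n i) := by
      intro i _
      rw [if_neg (by omega), Nat.add_sub_cancel, Nat.choose_succ_succ i 1,
        Nat.choose_one_right, pow_add, show -(x * Q) = (-x) * Q by ring, mul_pow]
      ring
    rw [Finset.sum_congr rfl hsh, ← Finset.mul_sum, ih (x * Q),
      Finset.prod_range_succ' (fun s => 1 - x * Q ^ s) n]
    have hc : ∀ s ∈ range n, (1 - x * Q ^ (s + 1)) = 1 - x * Q * Q ^ s := by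
      intro s _; rw [pow_succ]; ring
    rw [Finset.prod_congr rfl hc]
    simp only [if_true, mul_zero, pow_zero]
    ring

lemma bigS (Q x : K) (hQ : Q ≠ 0) (d₁ d₂ : ℕ) :
    ∑ β₁ ∈ range (d₁ + 1), ∑ β₂ ∈ range (d₂ + 1),
      (-x) ^ (β₁ + β₂) * Q ^ ((β₁ + β₂).choose 2) *
        Q ^ ((β₁ : ℤ) * ((d₂ : ℤ) - (β₂ : ℤ))) * (gb Q d₁ β₁ * gb Q d₂ β₂)
      = ∏ s ∈ range (d₁ + d₂), (1 - x * Q ^ s) := by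
  set f : ℕ × ℕ → K := fun p => (-x) ^ (p.1 + p.2) * Q ^ ((p.1 + p.2).choose 2) *
    Q ^ ((p.1 : ℤ) * ((d₂ : ℤ) - (p.2 : ℤ))) * (gb Q d₁ p.1 * gb Q d₂ p.2) with hf
  have h1 : ∑ β₁ ∈ range (d₁ + 1), ∑ β₂ ∈ range (d₂ + 1),
      (-x) ^ (β₁ + β₂) * Q ^ ((β₁ + β₂).choose 2) *
        Q ^ ((β₁ : ℤ) * ((d₂ : ℤ) - (β₂ : ℤ))) * (gb Q d₁ β₁ * gb Q d₂ β₂)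
      = ∑ p ∈ (range (d₁ + 1)) ×ˢ (range (d₂ + 1)), f p := by
    rw [Finset.sum_product]
  rw [h1]
  have h2 : ∑ p ∈ (range (d₁ + 1)) ×ˢ (range (d₂ + 1)), f p
      = ∑ p ∈ (range (d₁ + d₂ + 1)).biUnion (fun b => Finset.HasAntidiagonal.antidiagonal b), f p := by
    apply Finset.sum_subset
    · intro p hp
      simp only [Finset.mem_product, Finset.mem_range] at hp
      rw [Finset.mem_biUnion]
      exact ⟨p.1 + p.2, by rw [Finset.mem_range]; omega,
        by rw [Finset.HasAntidiagonal.mem_antidiagonal]⟩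
    · intro p hp hnp
      simp only [Finset.mem_product, Finset.mem_range, not_and_or, not_lt] at hnp
      rcases hnp with h | h
      · rw [hf]; simp only; rw [gb_eq_zero Q (by omega)]; ring
      · rw [hf]; simp only; rw [gb_eq_zero Q (show d₂ < p.2 by omega)]; ring
  rw [h2, Finset.sum_biUnion]
  · have h3 : ∀ b ∈ range (d₁ + d₂ + 1),
        ∑ p ∈ Finset.HasAntidiagonal.antidiagonal b, f p
          = (-x) ^ b * Q ^ (b.choose 2) * gb Q (d₁ + d₂) b := by
      intro b _
      rw [Finset.Nat.sum_antidiagonal_eq_sum_range_succ_mk]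
      rw [← vdm Q hQ d₁ d₂ b, Finset.mul_sum]
      apply Finset.sum_congr rfl
      intro j hj
      simp only [Finset.mem_range] at hj
      rw [hf]
      simp only
      have e1 : j + (b - j) = b := by omega
      have e2 : ((j:ℤ) * ((d₂:ℤ) - ((b - j : ℕ):ℤ))) = (j:ℤ) * ((d₂:ℤ) - (b:ℤ) + (j:ℤ)) := by
        push_cast [Nat.cast_sub (show j ≤ b by omega)]; ring
      rw [e1, e2]
      ring
    rw [Finset.sum_congr rfl h3, qbt Q (d₁ + d₂) x]
  · intro a _ b _ hab
    simp only [Function.onFun]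
    apply Finset.disjoint_left.mpr
    intro p hpa hpb
    rw [Finset.HasAntidiagonal.mem_antidiagonal] at hpa hpb
    exact hab (by omega)

lemma two_mul_choose_two : ∀ b : ℕ, 2 * b.choose 2 = b * (b - 1)
  | 0 => rfl
  | b + 1 => by
    rw [Nat.choose_succ_succ, Nat.choose_one_right, Nat.mul_add, two_mul_choose_two b]
    cases b <;> [rfl; (rename_i c; rw [Nat.succ_sub_one, Nat.succ_sub_one]; ring)]

lemma choose_two_cast (b : ℕ) : ((b.choose 2 : ℕ) : ℤ) * 2 = (b : ℤ) * ((b : ℤ) - 1) := by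
  rcases b with _ | c
  · simp
  · have hz : (2 : ℤ) * ((c + 1).choose 2 : ℤ) = ((c : ℤ) + 1) * (c : ℤ) := by
      have h := two_mul_choose_two (c + 1)
      rw [Nat.succ_sub_one] at h
      exact_mod_cast h
    push_cast
    linear_combination hz

lemma neg_one_zpow_even_shift (b : ℕ) (M : ℤ) :
    ((-1 : K)) ^ ((b : ℤ) + 2 * M) = (-1 : K) ^ b := by
  rw [zpow_add₀ (by norm_num : (-1 : K) ≠ 0), zpow_natCast, zpow_mul]
  norm_num

lemma numerator_id (q κ : K) (hq : q ≠ 0) (d₁ d₂ β₁ β₂ : ℕ) (k : ℤ)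
    (hβ₁ : β₁ ≤ d₁) (hβ₂ : β₂ ≤ d₂) :
    (-q) ^ (2 * (β₁ : ℤ) * ((d₂ - β₂ : ℕ) : ℤ) +
          (2 * k * (((d₁ - β₁ : ℕ) : ℤ) + ((d₂ - β₂ : ℕ) : ℤ)) +
            (2 * k + 1) * ((β₁ : ℤ) + (β₂ : ℤ))) * ((β₁ : ℤ) + (β₂ : ℤ))) *
        κ ^ (β₁ + β₂)
      = (-(κ * q ^ (2 * k * ((d₁ : ℤ) + (d₂ : ℤ)) + 1))) ^ (β₁ + β₂) *
          (q ^ 2 : K) ^ ((β₁ + β₂).choose 2) *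
          (q ^ 2 : K) ^ ((β₁ : ℤ) * ((d₂ : ℤ) - (β₂ : ℤ))) := by
  set M : ℤ := 2 * k * ((d₁ : ℤ) + (d₂ : ℤ)) + 1 with hM
  set E : ℤ := 2 * (β₁ : ℤ) * ((d₂ - β₂ : ℕ) : ℤ) +
      (2 * k * (((d₁ - β₁ : ℕ) : ℤ) + ((d₂ - β₂ : ℕ) : ℤ)) +
        (2 * k + 1) * ((β₁ : ℤ) + (β₂ : ℤ))) * ((β₁ : ℤ) + (β₂ : ℤ)) with hE
  have hC := choose_two_cast (β₁ + β₂)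
  have hEeq : E = ((β₁ + β₂ : ℕ) : ℤ) + 2 * (k * ((d₁ : ℤ) + (d₂ : ℤ)) * ((β₁ + β₂ : ℕ) : ℤ)
      + ((β₁ + β₂).choose 2 : ℤ) + (β₁ : ℤ) * ((d₂ : ℤ) - (β₂ : ℤ))) := by
    rw [hE]
    push_cast [Nat.cast_sub hβ₁, Nat.cast_sub hβ₂] at *
    linear_combination -hC
  have hEq2 : E = M * ((β₁ + β₂ : ℕ) : ℤ) + 2 * ((β₁ + β₂).choose 2 : ℤ)
      + 2 * ((β₁ : ℤ) * ((d₂ : ℤ) - (β₂ : ℤ))) := by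
    rw [hE, hM]
    push_cast [Nat.cast_sub hβ₁, Nat.cast_sub hβ₂] at *
    linear_combination -hC
  have h1 : (-q) ^ E = (-1 : K) ^ (β₁ + β₂) * q ^ E := by
    rw [show (-q) = (-1 : K) * q by ring, mul_zpow, hEeq, neg_one_zpow_even_shift]
  have r1 : ((q ^ M) ^ (β₁ + β₂) : K) = q ^ (M * ((β₁ + β₂ : ℕ) : ℤ)) := by
    rw [zpow_mul, zpow_natCast]
  have r2 : ((q ^ 2 : K) ^ ((β₁ + β₂).choose 2)) = q ^ ((2 * (β₁ + β₂).choose 2 : ℕ) : ℤ) := by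
    rw [zpow_natCast, ← pow_mul]
  have r3 : ((q ^ 2 : K) ^ ((β₁ : ℤ) * ((d₂ : ℤ) - (β₂ : ℤ))))
      = q ^ ((2 : ℤ) * ((β₁ : ℤ) * ((d₂ : ℤ) - (β₂ : ℤ)))) := by
    have hq2 : (q ^ (2:ℤ) : K) = q ^ (2:ℕ) := by
      rw [← zpow_natCast q 2]; norm_num
    rw [zpow_mul q 2 ((β₁ : ℤ) * ((d₂ : ℤ) - (β₂ : ℤ))), hq2]
  have h2 : q ^ E = ((q ^ M) ^ (β₁ + β₂) : K) * (q ^ 2 : K) ^ ((β₁ + β₂).choose 2) *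
      (q ^ 2 : K) ^ ((β₁ : ℤ) * ((d₂ : ℤ) - (β₂ : ℤ))) := by
    rw [r1, r2, r3, ← zpow_add₀ hq, ← zpow_add₀ hq]
    push_cast at hEq2 ⊢
    exact congrArg (fun t => q ^ t) hEq2
  rw [h1, h2, show (-(κ * q ^ M)) = (-1 : K) * κ * (q ^ M) by ring, mul_pow, mul_pow]
  ring


lemma PP_hP (q : K) (m : ℕ) :
    (∏ s ∈ range m, ((1:K) - q ^ (2 * (s + 1)))) = PP (q ^ 2) m := by
  rw [stmt8PP]
  exact Finset.prod_congr rfl fun s _ => by rw [pow_mul]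

lemma PP_ne_zero (q : K) (hpoch : ∀ s : ℕ, 1 ≤ s → (1 : K) - q ^ (2 * s) ≠ 0) (m : ℕ) :
    PP (q ^ 2) m ≠ 0 := by
  rw [stmt8PP]
  refine Finset.prod_ne_zero_iff.mpr fun s _ => ?_
  rw [← pow_mul]
  exact hpoch (s + 1) (by omega)

lemma main_aux (q κ : K) (hq : q ≠ 0)
    (hpoch : ∀ s : ℕ, 1 ≤ s → (1 : K) - q ^ (2 * s) ≠ 0)
    (d₁ d₂ : ℕ) (k : ℤ) :
    (∑ β₁ ∈ Finset.range (d₁ + 1), ∑ β₂ ∈ Finset.range (d₂ + 1),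
      (-q) ^ (2 * (β₁ : ℤ) * ((d₂ - β₂ : ℕ) : ℤ) +
          (2 * k * (((d₁ - β₁ : ℕ) : ℤ) + ((d₂ - β₂ : ℕ) : ℤ)) +
            (2 * k + 1) * ((β₁ : ℤ) + (β₂ : ℤ))) * ((β₁ : ℤ) + (β₂ : ℤ))) *
        κ ^ (β₁ + β₂) /
        ((∏ s ∈ Finset.range (d₁ - β₁), (1 - q ^ (2 * (s + 1)))) *
          (∏ s ∈ Finset.range β₁, (1 - q ^ (2 * (s + 1)))) *
          (∏ s ∈ Finset.range (d₂ - β₂), (1 - q ^ (2 * (s + 1)))) *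
          ∏ s ∈ Finset.range β₂, (1 - q ^ (2 * (s + 1)))) =
      (∏ s ∈ Finset.range (d₁ + d₂),
          (1 - κ * q ^ (2 * k * ((d₁ : ℤ) + (d₂ : ℤ)) + 1) * q ^ (2 * s))) /
        ((∏ s ∈ Finset.range d₁, (1 - q ^ (2 * (s + 1)))) *
          ∏ s ∈ Finset.range d₂, (1 - q ^ (2 * (s + 1))))) := by
  have hQ : (q ^ 2 : K) ≠ 0 := pow_ne_zero 2 hq
  have hPne := PP_ne_zero q hpoch
  calc
    ∑ β₁ ∈ Finset.range (d₁ + 1), ∑ β₂ ∈ Finset.range (d₂ + 1),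
      (-q) ^ (2 * (β₁ : ℤ) * ((d₂ - β₂ : ℕ) : ℤ) +
          (2 * k * (((d₁ - β₁ : ℕ) : ℤ) + ((d₂ - β₂ : ℕ) : ℤ)) +
            (2 * k + 1) * ((β₁ : ℤ) + (β₂ : ℤ))) * ((β₁ : ℤ) + (β₂ : ℤ))) *
        κ ^ (β₁ + β₂) /
        ((∏ s ∈ Finset.range (d₁ - β₁), (1 - q ^ (2 * (s + 1)))) *
          (∏ s ∈ Finset.range β₁, (1 - q ^ (2 * (s + 1)))) *
          (∏ s ∈ Finset.range (d₂ - β₂), (1 - q ^ (2 * (s + 1)))) *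
          ∏ s ∈ Finset.range β₂, (1 - q ^ (2 * (s + 1))))
      = ∑ β₁ ∈ Finset.range (d₁ + 1), ∑ β₂ ∈ Finset.range (d₂ + 1),
        ((-(κ * q ^ (2 * k * ((d₁ : ℤ) + (d₂ : ℤ)) + 1))) ^ (β₁ + β₂) *
          (q ^ 2 : K) ^ ((β₁ + β₂).choose 2) *
          (q ^ 2 : K) ^ ((β₁ : ℤ) * ((d₂ : ℤ) - (β₂ : ℤ))) *
          (gb (q ^ 2) d₁ β₁ * gb (q ^ 2) d₂ β₂)) /
          (PP (q ^ 2) d₁ * PP (q ^ 2) d₂) := by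
        refine Finset.sum_congr rfl fun β₁ h₁ => Finset.sum_congr rfl fun β₂ h₂ => ?_
        rw [Finset.mem_range] at h₁ h₂
        have hβ₁ : β₁ ≤ d₁ := by omega
        have hβ₂ : β₂ ≤ d₂ := by omega
        simp only [PP_hP]
        have g1 := gb_mul_PP (q ^ 2) d₁ β₁ hβ₁
        have g2 := gb_mul_PP (q ^ 2) d₂ β₂ hβ₂
        have hnum := numerator_id q κ hq d₁ d₂ β₁ β₂ k hβ₁ hβ₂
        rw [div_eq_div_iff
          (by exact mul_ne_zero (mul_ne_zero (mul_ne_zero (hPne _) (hPne _)) (hPne _)) (hPne _))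
          (mul_ne_zero (hPne d₁) (hPne d₂))]
        linear_combination (PP (q ^ 2) d₁ * PP (q ^ 2) d₂) * hnum
          - ((-(κ * q ^ (2 * k * ((d₁ : ℤ) + (d₂ : ℤ)) + 1))) ^ (β₁ + β₂) *
              (q ^ 2 : K) ^ ((β₁ + β₂).choose 2) *
              (q ^ 2 : K) ^ ((β₁ : ℤ) * ((d₂ : ℤ) - (β₂ : ℤ)))) *
            (gb (q ^ 2) d₂ β₂ * PP (q ^ 2) β₂ * PP (q ^ 2) (d₂ - β₂)) * g1
          - ((-(κ * q ^ (2 * k * ((d₁ : ℤ) + (d₂ : ℤ)) + 1))) ^ (β₁ + β₂) *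
              (q ^ 2 : K) ^ ((β₁ + β₂).choose 2) *
              (q ^ 2 : K) ^ ((β₁ : ℤ) * ((d₂ : ℤ) - (β₂ : ℤ)))) *
            PP (q ^ 2) d₁ * g2
    _ = (∑ β₁ ∈ Finset.range (d₁ + 1), ∑ β₂ ∈ Finset.range (d₂ + 1),
          (-(κ * q ^ (2 * k * ((d₁ : ℤ) + (d₂ : ℤ)) + 1))) ^ (β₁ + β₂) *
          (q ^ 2 : K) ^ ((β₁ + β₂).choose 2) *
          (q ^ 2 : K) ^ ((β₁ : ℤ) * ((d₂ : ℤ) - (β₂ : ℤ))) *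
          (gb (q ^ 2) d₁ β₁ * gb (q ^ 2) d₂ β₂)) /
          (PP (q ^ 2) d₁ * PP (q ^ 2) d₂) := by
        simp only [← Finset.sum_div]
    _ = (∏ s ∈ Finset.range (d₁ + d₂),
          (1 - (κ * q ^ (2 * k * ((d₁ : ℤ) + (d₂ : ℤ)) + 1)) * (q ^ 2 : K) ^ s)) /
          (PP (q ^ 2) d₁ * PP (q ^ 2) d₂) := by
        rw [bigS (q ^ 2) (κ * q ^ (2 * k * ((d₁ : ℤ) + (d₂ : ℤ)) + 1)) hQ d₁ d₂]
    _ = (∏ s ∈ Finset.range (d₁ + d₂),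
          (1 - κ * q ^ (2 * k * ((d₁ : ℤ) + (d₂ : ℤ)) + 1) * q ^ (2 * s))) /
        ((∏ s ∈ Finset.range d₁, (1 - q ^ (2 * (s + 1)))) *
          ∏ s ∈ Finset.range d₂, (1 - q ^ (2 * (s + 1)))) := by
        rw [PP_hP q d₁, PP_hP q d₂]
        congr 1
        exact Finset.prod_congr rfl fun s _ => by rw [pow_mul]

end Stmt8

/-- The `n = 2`, `l = 2k+1` case of the `(k,l)`-splitting symmetry: the two choices of
inversion term `β₁α₂` versus `β₂α₁` give the same function of `(d₁, d₂)`, both equal to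
`(κ q^{2k(d₁+d₂)+1}; q²)_{d₁+d₂} / ((q²;q²)_{d₁}(q²;q²)_{d₂})`. -/
theorem stmt_8 {K : Type*} [Field K] (q κ : K) (hq : q ≠ 0)
    (hpoch : ∀ s : ℕ, 1 ≤ s → (1 : K) - q ^ (2 * s) ≠ 0)
    (d₁ d₂ : ℕ) (k : ℤ) :
    (∑ β₁ ∈ Finset.range (d₁ + 1), ∑ β₂ ∈ Finset.range (d₂ + 1),
      (-q) ^ (2 * (β₁ : ℤ) * ((d₂ - β₂ : ℕ) : ℤ) +
          (2 * k * (((d₁ - β₁ : ℕ) : ℤ) + ((d₂ - β₂ : ℕ) : ℤ)) +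
            (2 * k + 1) * ((β₁ : ℤ) + (β₂ : ℤ))) * ((β₁ : ℤ) + (β₂ : ℤ))) *
        κ ^ (β₁ + β₂) /
        ((∏ s ∈ Finset.range (d₁ - β₁), (1 - q ^ (2 * (s + 1)))) *
          (∏ s ∈ Finset.range β₁, (1 - q ^ (2 * (s + 1)))) *
          (∏ s ∈ Finset.range (d₂ - β₂), (1 - q ^ (2 * (s + 1)))) *
          ∏ s ∈ Finset.range β₂, (1 - q ^ (2 * (s + 1)))) =
      (∏ s ∈ Finset.range (d₁ + d₂),
          (1 - κ * q ^ (2 * k * ((d₁ : ℤ) + (d₂ : ℤ)) + 1) * q ^ (2 * s))) /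
        ((∏ s ∈ Finset.range d₁, (1 - q ^ (2 * (s + 1)))) *
          ∏ s ∈ Finset.range d₂, (1 - q ^ (2 * (s + 1)))))
    ∧
    (∑ β₁ ∈ Finset.range (d₁ + 1), ∑ β₂ ∈ Finset.range (d₂ + 1),
      (-q) ^ (2 * (β₂ : ℤ) * ((d₁ - β₁ : ℕ) : ℤ) +
          (2 * k * (((d₁ - β₁ : ℕ) : ℤ) + ((d₂ - β₂ : ℕ) : ℤ)) +
            (2 * k + 1) * ((β₁ : ℤ) + (β₂ : ℤ))) * ((β₁ : ℤ) + (β₂ : ℤ))) *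
        κ ^ (β₁ + β₂) /
        ((∏ s ∈ Finset.range (d₁ - β₁), (1 - q ^ (2 * (s + 1)))) *
          (∏ s ∈ Finset.range β₁, (1 - q ^ (2 * (s + 1)))) *
          (∏ s ∈ Finset.range (d₂ - β₂), (1 - q ^ (2 * (s + 1)))) *
          ∏ s ∈ Finset.range β₂, (1 - q ^ (2 * (s + 1)))) =
      (∏ s ∈ Finset.range (d₁ + d₂),
          (1 - κ * q ^ (2 * k * ((d₁ : ℤ) + (d₂ : ℤ)) + 1) * q ^ (2 * s))) /
        ((∏ s ∈ Finset.range d₁, (1 - q ^ (2 * (s + 1)))) *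
          ∏ s ∈ Finset.range d₂, (1 - q ^ (2 * (s + 1))))) := by
  constructor
  · exact Stmt8.main_aux q κ hq hpoch d₁ d₂ k
  · have h := Stmt8.main_aux q κ hq hpoch d₂ d₁ k
    rw [Finset.sum_comm]
    calc
      ∑ β₂ ∈ Finset.range (d₂ + 1), ∑ β₁ ∈ Finset.range (d₁ + 1),
        (-q) ^ (2 * (β₂ : ℤ) * ((d₁ - β₁ : ℕ) : ℤ) +
            (2 * k * (((d₁ - β₁ : ℕ) : ℤ) + ((d₂ - β₂ : ℕ) : ℤ)) +
              (2 * k + 1) * ((β₁ : ℤ) + (β₂ : ℤ))) * ((β₁ : ℤ) + (β₂ : ℤ))) *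
          κ ^ (β₁ + β₂) /
          ((∏ s ∈ Finset.range (d₁ - β₁), (1 - q ^ (2 * (s + 1)))) *
            (∏ s ∈ Finset.range β₁, (1 - q ^ (2 * (s + 1)))) *
            (∏ s ∈ Finset.range (d₂ - β₂), (1 - q ^ (2 * (s + 1)))) *
            ∏ s ∈ Finset.range β₂, (1 - q ^ (2 * (s + 1))))
        = ∑ a ∈ Finset.range (d₂ + 1), ∑ b ∈ Finset.range (d₁ + 1),
          (-q) ^ (2 * (a : ℤ) * ((d₁ - b : ℕ) : ℤ) +
              (2 * k * (((d₂ - a : ℕ) : ℤ) + ((d₁ - b : ℕ) : ℤ)) +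
                (2 * k + 1) * ((a : ℤ) + (b : ℤ))) * ((a : ℤ) + (b : ℤ))) *
            κ ^ (a + b) /
            ((∏ s ∈ Finset.range (d₂ - a), (1 - q ^ (2 * (s + 1)))) *
              (∏ s ∈ Finset.range a, (1 - q ^ (2 * (s + 1)))) *
              (∏ s ∈ Finset.range (d₁ - b), (1 - q ^ (2 * (s + 1)))) *
              ∏ s ∈ Finset.range b, (1 - q ^ (2 * (s + 1)))) := by
          refine Finset.sum_congr rfl fun a _ => Finset.sum_congr rfl fun b _ => ?_
          rw [show (2 * (a : ℤ) * ((d₁ - b : ℕ) : ℤ) +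
              (2 * k * (((d₁ - b : ℕ) : ℤ) + ((d₂ - a : ℕ) : ℤ)) +
                (2 * k + 1) * ((b : ℤ) + (a : ℤ))) * ((b : ℤ) + (a : ℤ)))
            = (2 * (a : ℤ) * ((d₁ - b : ℕ) : ℤ) +
              (2 * k * (((d₂ - a : ℕ) : ℤ) + ((d₁ - b : ℕ) : ℤ)) +
                (2 * k + 1) * ((a : ℤ) + (b : ℤ))) * ((a : ℤ) + (b : ℤ))) from by ring,
            Nat.add_comm b a]
          ring
      _ = (∏ s ∈ Finset.range (d₂ + d₁),
            (1 - κ * q ^ (2 * k * ((d₂ : ℤ) + (d₁ : ℤ)) + 1) * q ^ (2 * s))) /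
          ((∏ s ∈ Finset.range d₂, (1 - q ^ (2 * (s + 1)))) *
            ∏ s ∈ Finset.range d₁, (1 - q ^ (2 * (s + 1)))) := h
      _ = (∏ s ∈ Finset.range (d₁ + d₂),
            (1 - κ * q ^ (2 * k * ((d₁ : ℤ) + (d₂ : ℤ)) + 1) * q ^ (2 * s))) /
          ((∏ s ∈ Finset.range d₁, (1 - q ^ (2 * (s + 1)))) *
            ∏ s ∈ Finset.range d₂, (1 - q ^ (2 * (s + 1)))) := by
          rw [Nat.add_comm d₂ d₁, add_comm (d₂ : ℤ) (d₁ : ℤ),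
            mul_comm (∏ s ∈ Finset.range d₂, ((1:K) - q ^ (2 * (s + 1))))
              (∏ s ∈ Finset.range d₁, ((1:K) - q ^ (2 * (s + 1))))]
end

section
/- Fix p ≥ 1 and define, for indices i ∈ {1, …, 2p+1}, vectors v_i ∈ ℤ² by: v₁ = (−2p, 2p); for even i = 2j (1 ≤ j ≤ p), v_{2j} = (−2(p−j), 2p); for odd i = 2j+1 (1 ≤ j ≤ p), v_{2j+1} = (−2(p−j) − 3, 2p+2). Then the number of unordered pairs of disjoint 2-element subsets {{a,b}, {c,d}} of {1,…,2p+1} (with a,b,c,d pairwise distinct) satisfying v_a + v_b = v_c + v_d equals p²(p−1)/2. -/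
/-!
Place generator `i` at the point `(r, x)` of `ℕ × ℕ`, where `r ∈ {0, 1}` is its row and `x` its
position, so that its degrees are `(-2x - 3r, 2p + 2r)`; the points are those with `r + x ≤ p`.
This change of coordinates is affine and injective, so it preserves pairings. Ordering the points
lexicographically, every pairing `{{a, b}, {c, d}}` has exactly one representative with
`a < c < d < b`. Such a quadruple lies either in one row, or has `a, c` in row 0 and `d, b` in
row 1. The one-row quadruples of both rows together correspond to the triples `x < y < z < p`,
and the two-row ones to two copies of the triples `x < y < z ≤ p`, so the count is
`C(p, 3) + 2 C(p + 1, 3) = p²(p - 1)/2`.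
-/

/-- The (q-degree, a-degree) vectors of the `2p+1` generators of the uncolored
HOMFLY-PT homology of the `(2, 2p+1)` torus knot: `v₁ = (-2p, 2p)`,
`v_{2j} = (-2(p-j), 2p)`, `v_{2j+1} = (-2(p-j) - 3, 2p+2)` for `1 ≤ j ≤ p`. -/
def torusVec (p : ℕ) (i : ℕ) : ℤ × ℤ :=
  if i = 1 then (-(2 * (p : ℤ)), 2 * (p : ℤ))
  else if i % 2 = 0 then (-(2 * ((p : ℤ) - ((i / 2 : ℕ) : ℤ))), 2 * (p : ℤ))
  else (-(2 * ((p : ℤ) - ((i / 2 : ℕ) : ℤ))) - 3, 2 * (p : ℤ) + 2)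

open Finset

theorem Finset.pair_eq_pair_iff {α : Type*} [DecidableEq α] {x y z w : α} :
    ({x, y} : Finset α) = {z, w} ↔ x = z ∧ y = w ∨ x = w ∧ y = z := by
  rw [← coe_inj, coe_pair, coe_pair, Set.pair_eq_pair_iff]

namespace TorusPairings

variable {ι M : Type*} [DecidableEq ι] [DecidableEq M]

def pairings [AddCommMonoid M] (s : Finset ι) (v : ι → M) : Finset (Finset (Finset ι)) :=
  ((s.powersetCard 2).powersetCard 2).filter fun u =>
    ∃ e ∈ u, ∃ f ∈ u, e ≠ f ∧ Disjoint e f ∧ ∑ i ∈ e, v i = ∑ i ∈ f, v i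

theorem pairings_eq_of_eq_map_add_const {N : Type*} [AddCommMonoid M] [AddCancelCommMonoid N]
    [DecidableEq N] {s : Finset ι} {v : ι → M} {w : ι → N} (f : M →+ N)
    (hf : Function.Injective f) (c : N) (h : ∀ i ∈ s, w i = f (v i) + c) :
    pairings s w = pairings s v := by
  refine filter_congr fun u hu => ?_
  have hsum : ∀ e ∈ u, ∑ i ∈ e, w i = f (∑ i ∈ e, v i) + 2 • c := fun e he => by
    obtain ⟨hes, he2⟩ := mem_powersetCard.1 ((mem_powersetCard.1 hu).1 he)
    rw [sum_congr rfl fun i hi => h i (hes hi), sum_add_distrib, sum_const, he2, map_sum]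
  refine exists_congr fun e => and_congr_right fun he =>
    exists_congr fun e' => and_congr_right fun he' => ?_
  rw [hsum e he, hsum e' he', add_left_inj, hf.eq_iff]

section NestedQuads

variable [AddCommMonoid M] [LinearOrder M]

def nestedQuads (s : Finset ι) (v : ι → M) : Finset (ι × ι × ι × ι) :=
  (s ×ˢ s ×ˢ s ×ˢ s).filter fun q =>
    v q.1 < v q.2.1 ∧ v q.2.1 < v q.2.2.1 ∧ v q.2.2.1 < v q.2.2.2 ∧
      v q.1 + v q.2.2.2 = v q.2.1 + v q.2.2.1

def quadPairing (q : ι × ι × ι × ι) : Finset (Finset ι) :=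
  {{q.1, q.2.2.2}, {q.2.1, q.2.2.1}}

variable {s : Finset ι} {v : ι → M}

theorem quadPairing_mem_pairings {q : ι × ι × ι × ι} (hq : q ∈ nestedQuads s v) :
    quadPairing q ∈ pairings s v := by
  obtain ⟨a, c, d, b⟩ := q
  simp only [nestedQuads, mem_filter, mem_product] at hq
  obtain ⟨⟨ha, hc, hd, hb⟩, hac, hcd, hdb, hsum⟩ := hq
  have hab : a ≠ b := ne_of_apply_ne v (hac.trans (hcd.trans hdb)).ne
  have hcd' : c ≠ d := ne_of_apply_ne v hcd.ne
  have hne : ({a, b} : Finset ι) ≠ {c, d} := by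
    rw [Ne, pair_eq_pair_iff]
    rintro (⟨rfl, -⟩ | ⟨rfl, -⟩)
    · exact hac.ne rfl
    · exact (hac.trans hcd).ne rfl
  refine mem_filter.2 ⟨mem_powersetCard.2 ⟨?_, card_pair hne⟩,
    {a, b}, by simp [quadPairing], {c, d}, by simp [quadPairing], hne, ?_, ?_⟩
  · simp only [quadPairing, insert_subset_iff, singleton_subset_iff, mem_powersetCard]
    exact ⟨⟨by simp [ha, hb], card_pair hab⟩,
      ⟨by simp [hc, hd], card_pair hcd'⟩⟩
  · simp only [disjoint_insert_left, disjoint_insert_right, disjoint_singleton, mem_insert,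
      mem_singleton, not_or]
    refine ⟨⟨?_, ?_⟩, ?_, ?_⟩ <;> rintro rfl <;> order
  · rw [sum_pair hab, sum_pair hcd', hsum]

theorem quadPairing_injOn : Set.InjOn quadPairing (nestedQuads s v : Set (ι × ι × ι × ι)) := by
  rintro ⟨a, c, d, b⟩ hq ⟨a', c', d', b'⟩ hq' h
  simp only [nestedQuads, coe_filter, mem_product, Set.mem_ofPred_eq] at hq hq'
  simp only [quadPairing, pair_eq_pair_iff] at h
  obtain ⟨-, hac, hcd, hdb, -⟩ := hq
  obtain ⟨-, hac', hcd', hdb', -⟩ := hq'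
  rcases h with ⟨⟨rfl, rfl⟩ | ⟨rfl, rfl⟩, ⟨rfl, rfl⟩ | ⟨rfl, rfl⟩⟩ |
      ⟨⟨rfl, rfl⟩ | ⟨rfl, rfl⟩, ⟨rfl, rfl⟩ | ⟨rfl, rfl⟩⟩ <;>
    first | rfl | order

theorem exists_mem_nestedQuads [IsOrderedCancelAddMonoid M] (hv : Set.InjOn v s)
    {x y z w : ι} (hx : x ∈ s) (hy : y ∈ s) (hz : z ∈ s) (hw : w ∈ s) (hxy : x ≠ y)
    (hzw : z ≠ w) (hdisj : Disjoint ({x, y} : Finset ι) {z, w}) (h : v x + v y = v z + v w) :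
    ∃ q ∈ nestedQuads s v, quadPairing q = {{x, y}, {z, w}} := by
  have hne : ∀ {i j}, i ∈ s → j ∈ s → i ≠ j → v i ≠ v j := fun hi hj hij => hv.ne hi hj hij
  wlog hvxy : v x < v y generalizing x y
  · obtain ⟨q, hq, hq'⟩ := this hy hx hxy.symm (by rwa [pair_comm]) (by rwa [add_comm])
      ((hne hx hy hxy).symm.lt_of_le (not_lt.1 hvxy))
    exact ⟨q, hq, by rw [hq', pair_comm y]⟩
  wlog hvzw : v z < v w generalizing z w
  · obtain ⟨q, hq, hq'⟩ := this hw hz hzw.symm (by rwa [pair_comm w]) (by rwa [add_comm (v w)])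
      ((hne hz hw hzw).symm.lt_of_le (not_lt.1 hvzw))
    exact ⟨q, hq, by rw [hq', pair_comm w]⟩
  wlog hvxz : v x < v z generalizing x y z w
  · have hxz : x ≠ z := fun hxz => disjoint_left.1 hdisj (mem_insert_self x _) (hxz ▸ by simp)
    obtain ⟨q, hq, hq'⟩ := this hz hw hzw hvzw hx hy hxy hdisj.symm h.symm hvxy
      ((hne hx hz hxz).symm.lt_of_le (not_lt.1 hvxz))
    exact ⟨q, hq, by rw [hq', pair_comm]⟩
  have hvwy : v w < v y := lt_of_not_ge fun hyw => (add_lt_add_of_lt_of_le hvxz hyw).ne h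
  exact ⟨(x, z, w, y), by simp [nestedQuads, *], by simp [quadPairing]⟩

theorem card_pairings_eq_card_nestedQuads [IsOrderedCancelAddMonoid M] (hv : Set.InjOn v s) :
    #(pairings s v) = #(nestedQuads s v) := by
  refine (card_bij (fun q _ => quadPairing q) (fun q hq => quadPairing_mem_pairings hq)
    (fun q hq q' hq' h => quadPairing_injOn hq hq' h) fun u hu => ?_).symm
  obtain ⟨hu, e, he, f, hf, hef, hdisj, hsum⟩ := mem_filter.1 hu
  obtain ⟨hus, hu2⟩ := mem_powersetCard.1 hu
  obtain ⟨hes, he2⟩ := mem_powersetCard.1 (hus he)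
  obtain ⟨hfs, hf2⟩ := mem_powersetCard.1 (hus hf)
  obtain ⟨x, y, hxy, rfl⟩ := card_eq_two.1 he2
  obtain ⟨z, w, hzw, rfl⟩ := card_eq_two.1 hf2
  have hu_eq : u = {{x, y}, {z, w}} :=
    (eq_of_subset_of_card_le (insert_subset he (singleton_subset_iff.2 hf))
      (by rw [hu2, card_pair hef])).symm
  rw [sum_pair hxy, sum_pair hzw] at hsum
  obtain ⟨q, hq, hq'⟩ := exists_mem_nestedQuads hv (hes (by simp)) (hes (by simp))
    (hfs (by simp)) (hfs (by simp)) hxy hzw hdisj hsum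
  exact ⟨q, hq, hq'.trans hu_eq.symm⟩

omit [DecidableEq ι] in
theorem card_nestedQuads_comp {κ : Type*} [DecidableEq κ] {f : ι → κ} {w : κ → M}
    (hf : Set.InjOn f s) : #(nestedQuads s (w ∘ f)) = #(nestedQuads (s.image f) w) := by
  refine card_nbij (fun q => (f q.1, f q.2.1, f q.2.2.1, f q.2.2.2)) ?_ ?_ ?_
  · rintro ⟨a, c, d, b⟩ hq
    simp only [nestedQuads, coe_filter, mem_product, Function.comp_apply] at hq
    simp only [nestedQuads, coe_filter, mem_product, mem_image]
    exact ⟨⟨⟨a, hq.1.1, rfl⟩, ⟨c, hq.1.2.1, rfl⟩, ⟨d, hq.1.2.2.1, rfl⟩, ⟨b, hq.1.2.2.2, rfl⟩⟩, hq.2⟩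
  · rintro ⟨a, c, d, b⟩ hq ⟨a', c', d', b'⟩ hq' h
    simp only [nestedQuads, coe_filter, mem_product] at hq hq'
    simp only [Prod.mk.injEq] at h ⊢
    exact ⟨hf hq.1.1 hq'.1.1 h.1, hf hq.1.2.1 hq'.1.2.1 h.2.1, hf hq.1.2.2.1 hq'.1.2.2.1 h.2.2.1,
      hf hq.1.2.2.2 hq'.1.2.2.2 h.2.2.2⟩
  · rintro ⟨_, _, _, _⟩ hq
    simp only [nestedQuads, coe_filter, mem_product, mem_image] at hq
    obtain ⟨⟨⟨a, ha, rfl⟩, ⟨c, hc, rfl⟩, ⟨d, hd, rfl⟩, ⟨b, hb, rfl⟩⟩, hq⟩ := hq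
    exact ⟨(a, c, d, b), by simpa [nestedQuads, ha, hb, hc, hd] using hq, rfl⟩

end NestedQuads

def rowCoord (p i : ℕ) : ℕ × ℕ := if i = 1 then (0, p) else (i % 2, p - i / 2)

def rowPoints (p : ℕ) : Finset (ℕ × ℕ) :=
  (range 2 ×ˢ range (p + 1)).filter fun z => z.1 + z.2 ≤ p

def degreeMap : ℕ ×ₗ ℕ →+ ℤ × ℤ where
  toFun z := (-(2 * ((ofLex z).2 : ℤ)) - 3 * (ofLex z).1, 2 * (ofLex z).1)
  map_zero' := by simp
  map_add' x y := by
    simp only [ofLex_add, Prod.fst_add, Prod.snd_add, Nat.cast_add, Prod.mk_add_mk, Prod.mk.injEq]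
    constructor <;> ring

theorem degreeMap_injective : Function.Injective degreeMap := by
  intro x y h
  simp only [degreeMap, AddMonoidHom.coe_mk, ZeroHom.coe_mk, Prod.mk.injEq] at h
  apply ofLex.injective
  ext <;> omega

theorem torusVec_eq {p i : ℕ} (hi : i ∈ Icc 1 (2 * p + 1)) :
    torusVec p i = degreeMap (toLex (rowCoord p i)) + (0, 2 * (p : ℤ)) := by
  rw [mem_Icc] at hi
  simp only [torusVec, rowCoord, degreeMap, AddMonoidHom.coe_mk, ZeroHom.coe_mk, ofLex_toLex]
  split_ifs <;> simp only [Prod.ext_iff, Prod.fst_add, Prod.snd_add] <;> omega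

theorem rowCoord_injOn (p : ℕ) : Set.InjOn (rowCoord p) (Icc 1 (2 * p + 1)) := by
  intro i hi j hj h
  simp only [coe_Icc, Set.mem_Icc] at hi hj
  simp only [rowCoord] at h
  split_ifs at h <;> simp only [Prod.mk.injEq] at h <;> omega

theorem image_rowCoord (p : ℕ) : (Icc 1 (2 * p + 1)).image (rowCoord p) = rowPoints p := by
  ext ⟨r, x⟩
  simp only [mem_image, mem_Icc, rowPoints, mem_filter, mem_product, mem_range, rowCoord]
  constructor
  · rintro ⟨i, hi, h⟩
    split_ifs at h <;> simp only [Prod.mk.injEq] at h <;> omega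
  · rintro ⟨⟨hr, -⟩, hrx⟩
    refine ⟨if r = 0 ∧ x = p then 1 else 2 * (p - x) + r, ?_⟩
    split_ifs <;> simp only [Prod.mk.injEq] <;> omega

def triples (n : ℕ) : Finset (ℕ × ℕ × ℕ) :=
  (range n ×ˢ range n ×ˢ range n).filter fun t => t.1 < t.2.1 ∧ t.2.1 < t.2.2

theorem mem_triples {n : ℕ} {t : ℕ × ℕ × ℕ} :
    t ∈ triples n ↔ t.1 < t.2.1 ∧ t.2.1 < t.2.2 ∧ t.2.2 < n := by
  simp only [triples, mem_filter, mem_product, mem_range]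
  omega

theorem card_triples (n : ℕ) : #(triples n) = n.choose 3 := by
  induction n with
  | zero => rfl
  | succ n ih =>
    have hlt : (triples (n + 1)).filter (fun t => t.2.2 < n) = triples n := by
      ext t
      simp only [mem_filter, mem_triples]
      omega
    have htop : #((triples (n + 1)).filter fun t => ¬t.2.2 < n) =
        #((range n ×ˢ range n).filter fun t => t.1 < t.2) := by
      refine card_nbij' (fun t => (t.1, t.2.1)) (fun t => (t.1, t.2, n)) ?_ ?_ ?_ ?_ <;>
        intro t ht <;>
        simp only [coe_filter, Set.mem_ofPred_eq, mem_triples, mem_product, mem_range,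
          Prod.ext_iff, true_and] at ht ⊢ <;>
        omega
    rw [← card_filter_add_card_filter_not (p := fun t => t.2.2 < n), hlt, htop,
      card_product_filter_lt, card_range, ih, Nat.choose_succ_succ', add_comm]

variable {p : ℕ}

theorem mem_nestedQuads_rowPoints {q : (ℕ × ℕ) × (ℕ × ℕ) × (ℕ × ℕ) × (ℕ × ℕ)} :
    q ∈ nestedQuads (rowPoints p) toLex ↔
      (q.1.1 < 2 ∧ q.1.1 + q.1.2 ≤ p) ∧ (q.2.1.1 < 2 ∧ q.2.1.1 + q.2.1.2 ≤ p) ∧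
      (q.2.2.1.1 < 2 ∧ q.2.2.1.1 + q.2.2.1.2 ≤ p) ∧ (q.2.2.2.1 < 2 ∧ q.2.2.2.1 + q.2.2.2.2 ≤ p) ∧
      (q.1.1 < q.2.1.1 ∨ q.1.1 = q.2.1.1 ∧ q.1.2 < q.2.1.2) ∧
      (q.2.1.1 < q.2.2.1.1 ∨ q.2.1.1 = q.2.2.1.1 ∧ q.2.1.2 < q.2.2.1.2) ∧
      (q.2.2.1.1 < q.2.2.2.1 ∨ q.2.2.1.1 = q.2.2.2.1 ∧ q.2.2.1.2 < q.2.2.2.2) ∧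
      q.1.1 + q.2.2.2.1 = q.2.1.1 + q.2.2.1.1 ∧ q.1.2 + q.2.2.2.2 = q.2.1.2 + q.2.2.1.2 := by
  simp only [nestedQuads, rowPoints, mem_filter, mem_product, mem_range,
    Prod.Lex.toLex_lt_toLex, ← toLex_add, toLex_inj, Prod.ext_iff, Prod.fst_add, Prod.snd_add]
  omega

/-- Quadruples in row `0` go to the triples with `2y ≤ x + z`, those in row `1`, reflected, to
the others. -/
theorem card_nestedQuads_rowPoints_sameRow :
    #((nestedQuads (rowPoints p) toLex).filter fun q => q.1.1 = q.2.2.2.1) = #(triples p) := by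
  refine card_nbij'
    (fun q => if q.1.1 = 0 then (q.1.2, q.2.1.2, q.2.2.2.2 - 1)
      else (p - 1 - q.2.2.2.2, p - 1 - q.2.1.2, p - 1 - q.1.2))
    (fun t => if 2 * t.2.1 ≤ t.1 + t.2.2 then
        ((0, t.1), (0, t.2.1), (0, t.1 + t.2.2 + 1 - t.2.1), (0, t.2.2 + 1))
      else
        ((1, p - 1 - t.2.2), (1, p - 1 - t.2.1), (1, p - 1 + t.2.1 - t.1 - t.2.2), (1, p - 1 - t.1)))
    ?_ ?_ ?_ ?_ <;>
  intro q hq <;> dsimp only <;> split_ifs <;>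
  simp only [coe_filter, Set.mem_ofPred_eq, mem_coe, mem_nestedQuads_rowPoints, mem_triples,
    Prod.ext_iff, true_and, and_true, not_true_eq_false] at * <;> omega

/-- On positions, `(a, c, d, b) ↦ (a, c, b + 1)` if `c ≤ b`, and `(a, c, d, b) ↦ (d, b, c)`
otherwise. -/
theorem card_nestedQuads_rowPoints_mixedRow :
    #((nestedQuads (rowPoints p) toLex).filter fun q => ¬q.1.1 = q.2.2.2.1) =
      2 * #(triples (p + 1)) := by
  rw [two_mul, ← card_filter_add_card_filter_not (p := fun q => q.2.1.2 ≤ q.2.2.2.2)]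
  congr 1
  · refine card_nbij' (fun q => (q.1.2, q.2.1.2, q.2.2.2.2 + 1))
      (fun t => ((0, t.1), (0, t.2.1), (1, t.1 + t.2.2 - 1 - t.2.1), (1, t.2.2 - 1)))
      ?_ ?_ ?_ ?_ <;>
    intro q hq <;>
    simp only [coe_filter, mem_filter, Set.mem_ofPred_eq, mem_coe, mem_nestedQuads_rowPoints,
      mem_triples, Prod.ext_iff, true_and, and_true] at hq ⊢ <;> omega
  · refine card_nbij' (fun q => (q.2.2.1.2, q.2.2.2.2, q.2.1.2))
      (fun t => ((0, t.1 + t.2.2 - t.2.1), (0, t.2.2), (1, t.1), (1, t.2.1)))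
      ?_ ?_ ?_ ?_ <;>
    intro q hq <;>
    simp only [coe_filter, mem_filter, Set.mem_ofPred_eq, mem_coe, mem_nestedQuads_rowPoints,
      mem_triples, Prod.ext_iff, true_and, and_true] at hq ⊢ <;> omega

theorem card_nestedQuads_rowPoints :
    #(nestedQuads (rowPoints p) toLex) = p.choose 3 + 2 * (p + 1).choose 3 := by
  rw [← card_filter_add_card_filter_not (p := fun q => q.1.1 = q.2.2.2.1),
    card_nestedQuads_rowPoints_sameRow, card_nestedQuads_rowPoints_mixedRow, card_triples,
    card_triples]

theorem choose_three_add_two_mul_choose_three :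
    p.choose 3 + 2 * (p + 1).choose 3 = p ^ 2 * (p - 1) / 2 := by
  have hchoose : ∀ n : ℕ, 6 * n.choose 3 = n * (n - 1) * (n - 2) := fun n => by
    rw [show 6 = Nat.factorial 3 from rfl, ← Nat.descFactorial_eq_factorial_mul_choose]
    simp [Nat.descFactorial, mul_comm]
  have hsum : 6 * (p.choose 3 + 2 * (p + 1).choose 3) = 3 * (p ^ 2 * (p - 1)) := by
    rw [mul_add, mul_left_comm, hchoose, hchoose]
    rcases p with _ | _ | m
    · rfl
    · rfl
    · rw [show m + 1 + 1 + 1 - 2 = m + 1 by omega, show m + 1 + 1 - 2 = m by omega]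
      simp only [Nat.add_sub_cancel]
      ring
  omega

end TorusPairings

open TorusPairings

theorem stmt_9_general (p : ℕ) :
    (((((Finset.Icc 1 (2 * p + 1)).powersetCard 2).powersetCard 2)).filter
      (fun u => ∃ e ∈ u, ∃ f ∈ u, e ≠ f ∧ Disjoint e f ∧
        ∑ i ∈ e, torusVec p i = ∑ i ∈ f, torusVec p i)).card
    = p ^ 2 * (p - 1) / 2 := by
  change #(pairings (Icc 1 (2 * p + 1)) (torusVec p)) = _
  rw [pairings_eq_of_eq_map_add_const (v := toLex ∘ rowCoord p) degreeMap degreeMap_injective _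
      fun i hi => torusVec_eq hi,
    card_pairings_eq_card_nestedQuads (toLex.injective.comp_injOn (rowCoord_injOn p)),
    card_nestedQuads_comp (rowCoord_injOn p), image_rowCoord, card_nestedQuads_rowPoints,
    choose_three_add_two_mul_choose_three]

/-- The number of pairings (unordered pairs of disjoint 2-element subsets of the
generators satisfying the center-of-mass condition `v_a + v_b = v_c + v_d`) of the
`(2, 2p+1)` torus knot equals `p²(p-1)/2`. -/
theorem stmt_9 (p : ℕ) (hp : 1 ≤ p) :
    (((((Finset.Icc 1 (2 * p + 1)).powersetCard 2).powersetCard 2)).filter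
      (fun u => ∃ e ∈ u, ∃ f ∈ u, e ≠ f ∧ Disjoint e f ∧
        ∑ i ∈ e, torusVec p i = ∑ i ∈ f, torusVec p i)).card
    = p ^ 2 * (p - 1) / 2 :=
  stmt_9_general p
end
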